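/- arXiv:0805.4801 — 10 statements merged into one kernel-verified Lean document; each statement's English description precedes it below -/
import Mathlib

section
/- Let n ∈ {2,3} and let u = (u_ij) be an n×n magic unitary over a unital C*-algebra A, i.e., every entry u_ij is a projection and each row sum Σ_j u_ij and each column sum Σ_i u_ij equals 1. Then the entries u_ij pairwise commute. -/
/-!
Projections summing to `1` are pairwise orthogonal: `p ≤ 1 - q` for two of them, and for star
projections this order relation means `p * (1 - q) = p`. Hence two entries of a magic unitary in
the same row or column commute. For two entries `p = u i j`, `q = u k l` in different rows and
columns, a `2 × 2` magic unitary has `q = 1 - u i l`, which commutes with `p`; in the `3 × 3` case,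
expanding `p * q = p * q * (u i j + u i l + u i m)` along row `i` and using the orthogonality
relations gives `p * q = p * q * p`, a self-adjoint element, so `p * q = q * p`.
-/

theorem IsSelfAdjoint.commute_of_mul_eq_mul_mul {R : Type*} [Semigroup R] [StarMul R] {p q : R}
    (hp : IsSelfAdjoint p) (hq : IsSelfAdjoint q) (h : p * q = p * q * p) : Commute p q :=
  calc p * q = p * q * p := h
    _ = star (p * q * p) := by rw [star_mul, star_mul, hp.star_eq, hq.star_eq, mul_assoc]
    _ = q * p := by rw [← h, star_mul, hp.star_eq, hq.star_eq]

theorem IsStarProjection.mul_eq_zero_of_sum_eq_one {A ι : Type*} [CStarAlgebra A] [Fintype ι]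
    {p : ι → A} (hp : ∀ i, IsStarProjection (p i)) (hsum : ∑ i, p i = 1) {a b : ι}
    (hab : a ≠ b) : p a * p b = 0 := by
  classical
  let := CStarAlgebra.spectralOrder A
  have := CStarAlgebra.spectralOrderedRing A
  have hle : p a ≤ 1 - p b := by
    rw [← hsum, ← Finset.sum_erase_eq_sub (Finset.mem_univ b)]
    exact Finset.single_le_sum (fun i _ ↦ (hp i).nonneg)
      (Finset.mem_erase.mpr ⟨hab, Finset.mem_univ a⟩)
  have hmul := ((hp a).le_iff_mul_eq_left (hp b).one_sub).mp hle
  rwa [mul_sub, mul_one, sub_eq_self] at hmul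

theorem Fin.sum_univ_two_of_ne {M : Type*} [AddCommMonoid M] {a b : Fin 2} (hab : a ≠ b)
    (f : Fin 2 → M) : ∑ i, f i = f a + f b := by
  rw [← Finset.sum_pair hab, Finset.eq_univ_of_card {a, b} (by simp [hab])]

theorem Fin.sum_univ_three_of_ne {M : Type*} [AddCommMonoid M] {a b c : Fin 3} (hab : a ≠ b)
    (hac : a ≠ c) (hbc : b ≠ c) (f : Fin 3 → M) : ∑ i, f i = f a + f b + f c := by
  rw [add_assoc, ← Finset.sum_pair hbc, ← Finset.sum_insert (by simp [hab, hac]),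
    Finset.eq_univ_of_card {a, b, c} (by simp [hab, hac, hbc])]

theorem Fin.exists_ne_and_ne (a b : Fin 3) : ∃ c, c ≠ a ∧ c ≠ b := by
  decide +revert

open Matrix

structure IsMagicUnitary {ι A : Type*} [Fintype ι] [Semiring A] [Star A] (u : Matrix ι ι A) :
    Prop where
  isStarProjection : ∀ i j, IsStarProjection (u i j)
  sum_row : ∀ i, ∑ j, u i j = 1
  sum_col : ∀ j, ∑ i, u i j = 1

namespace IsMagicUnitary

section Semiring

variable {ι A : Type*} [Fintype ι] [Semiring A] [Star A] {u : Matrix ι ι A}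

theorem transpose (hu : IsMagicUnitary u) : IsMagicUnitary uᵀ :=
  ⟨fun i j ↦ hu.isStarProjection j i, hu.sum_col, hu.sum_row⟩

end Semiring

variable {ι A : Type*} [Fintype ι] [CStarAlgebra A] {u : Matrix ι ι A}

theorem mul_eq_zero_of_same_row (hu : IsMagicUnitary u) (i : ι) {j l : ι} (hjl : j ≠ l) :
    u i j * u i l = 0 :=
  IsStarProjection.mul_eq_zero_of_sum_eq_one (hu.isStarProjection i) (hu.sum_row i) hjl

theorem mul_eq_zero_of_same_col (hu : IsMagicUnitary u) (j : ι) {i k : ι} (hik : i ≠ k) :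
    u i j * u k j = 0 :=
  hu.transpose.mul_eq_zero_of_same_row j hik

theorem commute_of_same_row (hu : IsMagicUnitary u) (i j l : ι) : Commute (u i j) (u i l) := by
  rcases eq_or_ne j l with rfl | hjl
  · exact Commute.refl _
  · rw [commute_iff_eq, hu.mul_eq_zero_of_same_row i hjl, hu.mul_eq_zero_of_same_row i hjl.symm]

theorem commute_of_same_col (hu : IsMagicUnitary u) (j i k : ι) : Commute (u i j) (u k j) :=
  hu.transpose.commute_of_same_row j i k

theorem commute_of_fin_two {u : Matrix (Fin 2) (Fin 2) A} (hu : IsMagicUnitary u) {i k : Fin 2}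
    (hik : i ≠ k) (j l : Fin 2) : Commute (u i j) (u k l) := by
  have hkl : u k l = 1 - u i l := by
    rw [← hu.sum_col l, Fin.sum_univ_two_of_ne hik, add_sub_cancel_left]
  rw [hkl]
  exact (Commute.one_right _).sub_right (hu.commute_of_same_row i j l)

theorem commute_of_fin_three {u : Matrix (Fin 3) (Fin 3) A} (hu : IsMagicUnitary u)
    {i k j l : Fin 3} (hik : i ≠ k) (hjl : j ≠ l) : Commute (u i j) (u k l) := by
  obtain ⟨m, hmj, hml⟩ := Fin.exists_ne_and_ne j l
  have hrow (r : Fin 3) : u r j + u r l + u r m = 1 := by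
    rw [← hu.sum_row r, Fin.sum_univ_three_of_ne hjl hmj.symm hml.symm]
  have hkl : u k l = 1 - u k j - u k m := by
    rw [← hrow k]; abel
  have h_il : u i j * u k l * u i l = 0 := by
    rw [mul_assoc, hu.mul_eq_zero_of_same_col l hik.symm, mul_zero]
  have h_im : u i j * u k l * u i m = 0 :=
    calc u i j * u k l * u i m
        = u i j * u i m - u i j * u k j * u i m - u i j * (u k m * u i m) := by
          rw [hkl]; noncomm_ring
      _ = 0 := by
          rw [hu.mul_eq_zero_of_same_row i hmj.symm, hu.mul_eq_zero_of_same_col j hik,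
            hu.mul_eq_zero_of_same_col m hik.symm]
          simp
  refine (hu.isStarProjection i j).isSelfAdjoint.commute_of_mul_eq_mul_mul
    (hu.isStarProjection k l).isSelfAdjoint ?_
  calc u i j * u k l = u i j * u k l * (u i j + u i l + u i m) := by rw [hrow i, mul_one]
    _ = u i j * u k l * u i j := by rw [mul_add, mul_add, h_il, h_im, add_zero, add_zero]

end IsMagicUnitary

/-- the entries of an `n × n` magic unitary over a unital C*-algebra
pairwise commute when `n = 2` or `n = 3`. -/
theorem magic_unitary_entries_commute_of_small {A : Type*} [CStarAlgebra A]
    (n : ℕ) (hn : n = 2 ∨ n = 3) (u : Fin n → Fin n → A)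
    (hproj : ∀ i j, star (u i j) = u i j ∧ u i j * u i j = u i j)
    (hrow : ∀ i, ∑ j, u i j = 1)
    (hcol : ∀ j, ∑ i, u i j = 1) :
    ∀ i j k l, Commute (u i j) (u k l) := by
  have hu : IsMagicUnitary u :=
    ⟨fun i j ↦ ⟨(hproj i j).2, (hproj i j).1⟩, hrow, hcol⟩
  intro i j k l
  rcases eq_or_ne i k with rfl | hik
  · exact hu.commute_of_same_row i j l
  rcases eq_or_ne j l with rfl | hjl
  · exact hu.commute_of_same_col j i k
  rcases hn with rfl | rfl
  · exact hu.commute_of_fin_two hik j l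
  · exact hu.commute_of_fin_three hik hjl
end

section
/- Let A be a unital C*-algebra, let s, n ≥ 1 be integers, and set w = exp(2πi/s). Let (a^p_{ij}), for p ∈ ℤ/sℤ and 1 ≤ i,j ≤ n, be elements of A such that the matrix M_{(p,i),(q,j)} = a^{q-p}_{ij} is a magic unitary (all entries are projections, and each row and each column of M sums to 1). Define U_ij = Σ_{p ∈ ℤ/sℤ} w^{-p} a^p_{ij}. Then the n×n matrix U = (U_ij) satisfies the level-s cubic relations: (1) U is unitary, i.e., Σ_k U_ik U_jk* = δ_ij·1 and Σ_k U_ki* U_kj = δ_ij·1; (2) the transpose U^t is unitary; (3) each U_ij is normal and P_ij := U_ij U_ij* = Σ_p a^p_{ij} is a projection; (4) U_ij^s = P_ij. -/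
/-!
Each `U_ij` is a combination of the projections `a^p_{ij}`, `p ∈ ℤ/sℤ`, with coefficients that
are `s`-th roots of unity. Projections in a row (or column) of the magic unitary sum to `1`,
hence are pairwise orthogonal, so such combinations multiply coefficientwise and products of
entries of `U` from different positions of a row or column vanish. This gives
`U_ij U_ij^* = U_ij^* U_ij = U_ij^s = Σ_p a^p_{ij}`, and summing over a row or column of the
magic unitary gives the unitarity of `U` and `Uᵗ`.
-/

open Complex in
/-- From a family `a^p_{ij}` whose associated circulant matrix is an
`(s,n)`-sudoku magic unitary, form `U_ij = Σ_p w^{-p} a^p_{ij}`, where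
`w = exp(2πi/s)`. -/
noncomputable def sudokuToCubic (s n : ℕ) [NeZero s] {A : Type*} [CStarAlgebra A]
    (a : ZMod s → Fin n → Fin n → A) (i j : Fin n) : A :=
  ∑ p : ZMod s, (Complex.exp (2 * Real.pi * Complex.I / s) ^ (-(p.val : ℤ))) • a p i j

open Finset

lemma CompleteOrthogonalIdempotents.of_isStarProjection {A ι : Type*} [CStarAlgebra A]
    [Fintype ι] {e : ι → A} (he : ∀ i, IsStarProjection (e i)) (hsum : ∑ i, e i = 1) :
    CompleteOrthogonalIdempotents e := by
  classical
  let := CStarAlgebra.spectralOrder A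
  have := CStarAlgebra.spectralOrderedRing A
  refine ⟨⟨fun i => (he i).isIdempotentElem, fun k l hkl => ?_⟩, hsum⟩
  have hle : e l ≤ 1 - e k := by
    rw [← hsum, ← add_sum_erase _ _ (mem_univ k), add_sub_cancel_left]
    exact single_le_sum (fun i _ => (he i).nonneg) (mem_erase.mpr ⟨Ne.symm hkl, mem_univ l⟩)
  have h := ((he l).le_iff_mul_eq_right (he k).one_sub).mp hle
  rwa [sub_mul, one_mul, sub_eq_self] at h

namespace OrthogonalIdempotents

variable {R A ι κ : Type*} [CommSemiring R] [Semiring A] [Algebra R A] [Fintype ι]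

lemma sum_smul_mul_sum_smul {e : ι → A} (he : OrthogonalIdempotents e) (c d : ι → R) :
    (∑ i, c i • e i) * (∑ i, d i • e i) = ∑ i, (c i * d i) • e i := by
  classical
  simp_rw [sum_mul, mul_sum, smul_mul_smul_comm, he.mul_eq, smul_ite, smul_zero,
    sum_ite_eq, mem_univ, if_true]

lemma sum_smul_pow {e : ι → A} (he : OrthogonalIdempotents e) (c : ι → R) {m : ℕ}
    (hm : m ≠ 0) : (∑ i, c i • e i) ^ m = ∑ i, c i ^ m • e i := by
  induction m with
  | zero => exact absurd rfl hm
  | succ m ih =>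
    rcases eq_or_ne m 0 with rfl | hm'
    · simp
    · rw [pow_succ, ih hm', he.sum_smul_mul_sum_smul]; simp_rw [← pow_succ]

lemma sum_smul_mul_sum_smul_of_prod [DecidableEq κ] {e : ι → κ → A}
    (he : OrthogonalIdempotents fun x : ι × κ => e x.1 x.2) (c d : ι → R) (i j : κ) :
    (∑ p, c p • e p i) * (∑ q, d q • e q j) =
      if i = j then ∑ p, (c p * d p) • e p i else 0 := by
  split_ifs with hij
  · subst hij
    exact (he.embedding (Function.Embedding.sectL ι i)).sum_smul_mul_sum_smul c d
  · rw [sum_mul_sum]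
    refine sum_eq_zero fun p _ => sum_eq_zero fun q _ => ?_
    have hpq : (p, i) ≠ (q, j) := by simp [hij]
    rw [smul_mul_smul_comm, he.ortho hpq, smul_zero]

end OrthogonalIdempotents

lemma Complex.star_mul_self_eq_one_of_pow_eq_one {z : ℂ} {s : ℕ} (hz : z ^ s = 1)
    (hs : s ≠ 0) : star z * z = 1 := by
  rw [mul_comm, Complex.star_def, Complex.mul_conj', Complex.norm_eq_one_of_pow_eq_one hz hs]
  simp

noncomputable def sudokuCoeff (s : ℕ) (p : ZMod s) : ℂ :=
  Complex.exp (2 * Real.pi * Complex.I / s) ^ (-(p.val : ℤ))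

section Sudoku

variable {s n : ℕ} [NeZero s]

lemma sudokuCoeff_pow_self (p : ZMod s) : sudokuCoeff s p ^ s = 1 := by
  rw [sudokuCoeff, ← zpow_natCast, ← zpow_mul, mul_comm _ (s : ℤ), zpow_mul, zpow_natCast,
    (Complex.isPrimitiveRoot_exp s (NeZero.ne s)).pow_eq_one, one_zpow]

lemma star_sudokuCoeff_mul_self (p : ZMod s) : star (sudokuCoeff s p) * sudokuCoeff s p = 1 :=
  Complex.star_mul_self_eq_one_of_pow_eq_one (sudokuCoeff_pow_self p) (NeZero.ne s)

lemma sudokuCoeff_mul_star_self (p : ZMod s) : sudokuCoeff s p * star (sudokuCoeff s p) = 1 := by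
  rw [mul_comm, star_sudokuCoeff_mul_self]

lemma sudokuToCubic_eq_sum {A : Type*} [CStarAlgebra A] (a : ZMod s → Fin n → Fin n → A)
    (i j : Fin n) : sudokuToCubic s n a i j = ∑ p, sudokuCoeff s p • a p i j :=
  rfl

/-- The magic-unitary condition on the circulant matrix `M_{(p,i),(q,j)} = a^{q-p}_{ij}`, reduced
to row `(0,i)` and column `(0,j)`, of which all other rows and columns are translates. -/
structure IsSudokuMagic {A : Type*} [Semiring A] [Star A] (a : ZMod s → Fin n → Fin n → A) :
    Prop where
  isStarProjection : ∀ p i j, IsStarProjection (a p i j)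
  sum_row : ∀ i, ∑ p, ∑ j, a p i j = 1
  sum_col : ∀ j, ∑ p, ∑ i, a p i j = 1

namespace IsSudokuMagic

lemma of_circulant {A : Type*} [Ring A] [Star A] {a : ZMod s → Fin n → Fin n → A}
    (hproj : ∀ (p q : ZMod s) (i j : Fin n),
      star (a (q - p) i j) = a (q - p) i j ∧ a (q - p) i j * a (q - p) i j = a (q - p) i j)
    (hrow : ∀ (p : ZMod s) (i : Fin n), ∑ q : ZMod s, ∑ j : Fin n, a (q - p) i j = 1)
    (hcol : ∀ (q : ZMod s) (j : Fin n), ∑ p : ZMod s, ∑ i : Fin n, a (q - p) i j = 1) :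
    IsSudokuMagic a where
  isStarProjection p i j := by
    obtain ⟨hsa, hidem⟩ := hproj 0 p i j
    rw [sub_zero] at hsa hidem
    exact ⟨hidem, hsa⟩
  sum_row i := by simpa using hrow 0 i
  sum_col j := by
    rw [← hcol 0 j]
    exact Fintype.sum_equiv (Equiv.neg _) _ _ fun p => by simp

variable {A : Type*} [CStarAlgebra A] {a : ZMod s → Fin n → Fin n → A} (h : IsSudokuMagic a)
include h

lemma transpose : IsSudokuMagic fun p i j => a p j i :=
  ⟨fun p i j => h.isStarProjection p j i, h.sum_col, h.sum_row⟩

lemma completeOrthogonalIdempotents_row (i : Fin n) :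
    CompleteOrthogonalIdempotents fun x : ZMod s × Fin n => a x.1 i x.2 :=
  .of_isStarProjection (fun x => h.isStarProjection _ _ _)
    (by rw [Fintype.sum_prod_type]; exact h.sum_row i)

lemma orthogonalIdempotents_entry (i j : Fin n) : OrthogonalIdempotents fun p => a p i j :=
  (h.completeOrthogonalIdempotents_row i).toOrthogonalIdempotents.embedding
    (Function.Embedding.sectL _ j)

lemma isStarProjection_sum (i j : Fin n) : IsStarProjection (∑ p, a p i j) :=
  ⟨(h.orthogonalIdempotents_entry i j).isIdempotentElem_sum,
    isSelfAdjoint_sum _ fun p _ => (h.isStarProjection p i j).isSelfAdjoint⟩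

lemma star_sudokuToCubic (i j : Fin n) :
    star (sudokuToCubic s n a i j) = ∑ p, star (sudokuCoeff s p) • a p i j := by
  simp only [sudokuToCubic_eq_sum, star_sum, star_smul,
    (h.isStarProjection _ i j).isSelfAdjoint.star_eq]

lemma sudokuToCubic_mul_star (k i j : Fin n) :
    sudokuToCubic s n a k i * star (sudokuToCubic s n a k j) =
      if i = j then ∑ p, a p k i else 0 := by
  rw [h.star_sudokuToCubic, sudokuToCubic_eq_sum,
    OrthogonalIdempotents.sum_smul_mul_sum_smul_of_prod (e := fun p i => a p k i)
      (h.completeOrthogonalIdempotents_row k).toOrthogonalIdempotents]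
  simp only [sudokuCoeff_mul_star_self, one_smul]

lemma star_sudokuToCubic_mul (k i j : Fin n) :
    star (sudokuToCubic s n a k i) * sudokuToCubic s n a k j =
      if i = j then ∑ p, a p k i else 0 := by
  rw [h.star_sudokuToCubic, sudokuToCubic_eq_sum,
    OrthogonalIdempotents.sum_smul_mul_sum_smul_of_prod (e := fun p i => a p k i)
      (h.completeOrthogonalIdempotents_row k).toOrthogonalIdempotents]
  simp only [star_sudokuCoeff_mul_self, one_smul]

lemma sum_sudokuToCubic_mul_star (i j : Fin n) :
    ∑ k, sudokuToCubic s n a k i * star (sudokuToCubic s n a k j) = if i = j then 1 else 0 := by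
  simp only [h.sudokuToCubic_mul_star, sum_ite_irrel, sum_const_zero]
  rw [sum_comm, h.sum_col]

lemma sum_star_sudokuToCubic_mul (i j : Fin n) :
    ∑ k, star (sudokuToCubic s n a k i) * sudokuToCubic s n a k j = if i = j then 1 else 0 := by
  simp only [h.star_sudokuToCubic_mul, sum_ite_irrel, sum_const_zero]
  rw [sum_comm, h.sum_col]

lemma sudokuToCubic_pow_self (i j : Fin n) : sudokuToCubic s n a i j ^ s = ∑ p, a p i j := by
  simp only [sudokuToCubic_eq_sum, (h.orthogonalIdempotents_entry i j).sum_smul_pow _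
    (NeZero.ne s), sudokuCoeff_pow_self, one_smul]

end IsSudokuMagic

end Sudoku

theorem sudoku_gives_cubic_general (s n : ℕ) [NeZero s]
    {A : Type*} [CStarAlgebra A]
    (a : ZMod s → Fin n → Fin n → A)
    (hproj : ∀ (p q : ZMod s) (i j : Fin n),
      star (a (q - p) i j) = a (q - p) i j ∧
        a (q - p) i j * a (q - p) i j = a (q - p) i j)
    (hrow : ∀ (p : ZMod s) (i : Fin n), ∑ q : ZMod s, ∑ j : Fin n, a (q - p) i j = 1)
    (hcol : ∀ (q : ZMod s) (j : Fin n), ∑ p : ZMod s, ∑ i : Fin n, a (q - p) i j = 1) :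
    (∀ i j, ∑ k, sudokuToCubic s n a i k * star (sudokuToCubic s n a j k) =
        if i = j then 1 else 0) ∧
    (∀ i j, ∑ k, star (sudokuToCubic s n a k i) * sudokuToCubic s n a k j =
        if i = j then 1 else 0) ∧
    (∀ i j, ∑ k, sudokuToCubic s n a k i * star (sudokuToCubic s n a k j) =
        if i = j then 1 else 0) ∧
    (∀ i j, ∑ k, star (sudokuToCubic s n a i k) * sudokuToCubic s n a j k =
        if i = j then 1 else 0) ∧
    (∀ i j, sudokuToCubic s n a i j * star (sudokuToCubic s n a i j) =
        star (sudokuToCubic s n a i j) * sudokuToCubic s n a i j) ∧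
    (∀ i j, sudokuToCubic s n a i j * star (sudokuToCubic s n a i j) =
        ∑ p : ZMod s, a p i j) ∧
    (∀ i j, star (sudokuToCubic s n a i j * star (sudokuToCubic s n a i j)) =
        sudokuToCubic s n a i j * star (sudokuToCubic s n a i j) ∧
      (sudokuToCubic s n a i j * star (sudokuToCubic s n a i j)) *
          (sudokuToCubic s n a i j * star (sudokuToCubic s n a i j)) =
        sudokuToCubic s n a i j * star (sudokuToCubic s n a i j)) ∧
    (∀ i j, sudokuToCubic s n a i j ^ s =
        sudokuToCubic s n a i j * star (sudokuToCubic s n a i j)) := by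
  have h : IsSudokuMagic a := .of_circulant hproj hrow hcol
  have hP : ∀ i j, sudokuToCubic s n a i j * star (sudokuToCubic s n a i j) = ∑ p, a p i j :=
    fun i j => by simpa using h.sudokuToCubic_mul_star i j j
  refine ⟨h.transpose.sum_sudokuToCubic_mul_star, h.sum_star_sudokuToCubic_mul,
    h.sum_sudokuToCubic_mul_star, h.transpose.sum_star_sudokuToCubic_mul, fun i j => ?_, hP,
    fun i j => ?_, fun i j => by rw [hP, h.sudokuToCubic_pow_self]⟩
  · rw [hP, h.star_sudokuToCubic_mul, if_pos rfl]
  · obtain ⟨hidem, hsa⟩ := h.isStarProjection_sum i j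
    rw [hP]
    exact ⟨hsa, hidem⟩

/-- if the circulant matrix `M_{(p,i),(q,j)} = a^{q-p}_{ij}` is a magic
unitary, then `U_ij = Σ_p w^{-p} a^p_{ij}` satisfies the level-`s` cubic relations:
`U` and its transpose are unitaries, each `U_ij` is normal with
`P_ij = U_ij U_ij* = Σ_p a^p_{ij}` a projection, and `U_ij^s = P_ij`. -/
theorem sudoku_gives_cubic (s n : ℕ) [NeZero s] (hn : 1 ≤ n)
    {A : Type*} [CStarAlgebra A]
    (a : ZMod s → Fin n → Fin n → A)
    (hproj : ∀ (p q : ZMod s) (i j : Fin n),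
      star (a (q - p) i j) = a (q - p) i j ∧
        a (q - p) i j * a (q - p) i j = a (q - p) i j)
    (hrow : ∀ (p : ZMod s) (i : Fin n), ∑ q : ZMod s, ∑ j : Fin n, a (q - p) i j = 1)
    (hcol : ∀ (q : ZMod s) (j : Fin n), ∑ p : ZMod s, ∑ i : Fin n, a (q - p) i j = 1) :
    (∀ i j, ∑ k, sudokuToCubic s n a i k * star (sudokuToCubic s n a j k) =
        if i = j then 1 else 0) ∧
    (∀ i j, ∑ k, star (sudokuToCubic s n a k i) * sudokuToCubic s n a k j =
        if i = j then 1 else 0) ∧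
    (∀ i j, ∑ k, sudokuToCubic s n a k i * star (sudokuToCubic s n a k j) =
        if i = j then 1 else 0) ∧
    (∀ i j, ∑ k, star (sudokuToCubic s n a i k) * sudokuToCubic s n a j k =
        if i = j then 1 else 0) ∧
    (∀ i j, sudokuToCubic s n a i j * star (sudokuToCubic s n a i j) =
        star (sudokuToCubic s n a i j) * sudokuToCubic s n a i j) ∧
    (∀ i j, sudokuToCubic s n a i j * star (sudokuToCubic s n a i j) =
        ∑ p : ZMod s, a p i j) ∧
    (∀ i j, star (sudokuToCubic s n a i j * star (sudokuToCubic s n a i j)) =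
        sudokuToCubic s n a i j * star (sudokuToCubic s n a i j) ∧
      (sudokuToCubic s n a i j * star (sudokuToCubic s n a i j)) *
          (sudokuToCubic s n a i j * star (sudokuToCubic s n a i j)) =
        sudokuToCubic s n a i j * star (sudokuToCubic s n a i j)) ∧
    (∀ i j, sudokuToCubic s n a i j ^ s =
        sudokuToCubic s n a i j * star (sudokuToCubic s n a i j)) :=
  sudoku_gives_cubic_general s n a hproj hrow hcol
end

section
/- Let a be a normal element of a C*-algebra, let s ≥ 2 be an integer, and suppose that p := a a* is a projection and that a^s = p. Then p a = a and a* = a^{s-1}. -/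
/-- if `a` is a normal element of a C*-algebra, `s ≥ 2`,
`p = a a*` is a projection and `a ^ s = p`, then `p a = a` and `a* = a ^ (s-1)`. -/
theorem normal_partial_isometry_props {A : Type*} [CStarAlgebra A]
    (a : A) (s : ℕ) (hs : 2 ≤ s)
    (hnormal : a * star a = star a * a)
    (hproj : star (a * star a) = a * star a ∧ (a * star a) * (a * star a) = a * star a)
    (hpow : a ^ s = a * star a) :
    (a * star a) * a = a ∧ star a = a ^ (s - 1) := by
  obtain ⟨hsa, hp2⟩ := hproj
  set p := a * star a with hp
  have h1 : p * a = a := by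
    have hstar : star (p * a - a) = star a * p - star a := by
      simp [star_sub, star_mul, hsa, mul_assoc]
    have hx : (p * a - a) * star (p * a - a) = 0 := by
      rw [hstar]
      have e1 : p * a * (star a * p) = p := by
        rw [mul_assoc, ← mul_assoc a, ← hp, ← mul_assoc, hp2, hp2]
      have e2 : p * a * star a = p := by rw [mul_assoc, ← hp, hp2]
      have e3 : a * (star a * p) = p := by rw [← mul_assoc, ← hp, hp2]
      rw [sub_mul, mul_sub, mul_sub, e1, e2, e3, ← hp]
      simp
    exact sub_eq_zero.mp ((CStarRing.mul_star_self_eq_zero_iff _).mp hx)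
  refine ⟨h1, ?_⟩
  -- second part
  have hcomm : Commute a (star a) := hnormal
  have hidem : IsIdempotentElem p := hp2
  have hs1 : s - 1 + 1 = s := by omega
  have hppow : p ^ (s - 1) = p := by
    rw [show s - 1 = s - 2 + 1 by omega]; exact hidem.pow_succ_eq (s - 2)
  have e1 : a ^ (s - 1) * star (a ^ (s - 1)) = p := by
    rw [star_pow, ← hcomm.mul_pow, ← hp, hppow]
  have e2 : a ^ (s - 1) * a = p := by
    rw [← pow_succ, hs1, hpow]
  have e3 : star a * star (a ^ (s - 1)) = p := by
    rw [star_pow, ← pow_succ', ← star_pow, hs1, hpow, hp, star_mul, star_star]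
  have e4 : star a * a = p := hnormal.symm
  have hx : (a ^ (s - 1) - star a) * star (a ^ (s - 1) - star a) = 0 := by
    rw [star_sub, star_star, sub_mul, mul_sub, mul_sub, e1, e2, e3, e4]
    simp
  exact (sub_eq_zero.mp ((CStarRing.mul_star_self_eq_zero_iff _).mp hx)).symm
end

section
/- Let A be a unital C*-algebra, let s ≥ 1 and n ≥ 1 be integers, and let u = (u_ij) be an n×n matrix over A satisfying the level-s cubic relations: u is unitary, the transpose u^t is unitary, each u_ij is normal, each p_ij = u_ij u_ij* is a projection, and u_ij^s = p_ij. Then u_ij u_ik = 0 whenever j ≠ k. -/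
/-!
Write `p_ij = u_ij u_ij*`. Row unitarity says that the projections of a row sum to `1`, and
projections summing to `1` are pairwise orthogonal: `p_j (∑ p_l) p_j = p_j` is a sum of the
positive elements `(p_l p_j)* (p_l p_j)`, so the off-diagonal ones vanish. Since `p_ij` is a
projection, `u_ij` is a partial isometry, `u_ij = p_ij u_ij`, and by normality also
`u_ij = u_ij p_ij`; hence `u_ij u_ik = u_ij p_ij p_ik u_ik = 0`.
-/

theorem mul_star_self_mul_eq_self_of_isStarProjection {R : Type*} [NonUnitalNormedRing R]
    [StarRing R] [CStarRing R] {a : R} (h : IsStarProjection (a * star a)) :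
    a * star a * a = a := by
  set p := a * star a
  have hsq : (p * a - a) * star (p * a - a) = 0 := by
    have hp : star p = p := h.isSelfAdjoint.star_eq
    calc (p * a - a) * star (p * a - a)
        = p * p * p - p * p - p * p + p := by
          simp only [star_sub, star_mul, hp, p]
          noncomm_ring
      _ = 0 := by simp only [h.isIdempotentElem.eq]; abel
  exact sub_eq_zero.mp ((CStarRing.mul_star_self_eq_zero_iff _).mp hsq)

theorem IsStarProjection.mul_eq_zero_of_sum_eq_one_s8 {R ι : Type*} [NormedRing R] [StarRing R]
    [CStarRing R] [PartialOrder R] [StarOrderedRing R] [Fintype ι] {p : ι → R}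
    (hp : ∀ l, IsStarProjection (p l)) (hsum : ∑ l, p l = 1) {j k : ι} (hjk : j ≠ k) :
    p j * p k = 0 := by
  classical
  have hconj : ∀ a b, star (p a * p b) * (p a * p b) = p b * p a * p b := fun a b => by
    rw [star_mul, (hp a).isSelfAdjoint.star_eq, (hp b).isSelfAdjoint.star_eq, mul_assoc,
      ← mul_assoc (p a), (hp a).isIdempotentElem.eq, ← mul_assoc]
  have hnonneg : ∀ l, 0 ≤ p k * p l * p k := fun l => hconj l k ▸ star_mul_self_nonneg _
  have hrest : ∑ l ∈ Finset.univ.erase k, p k * p l * p k = 0 := by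
    have h := calc
      ∑ l ∈ Finset.univ.erase k, p k * p l * p k + p k * p k * p k
          = p k * (∑ l, p l) * p k := by
            rw [Finset.sum_erase_add _ _ (Finset.mem_univ k), Finset.mul_sum, Finset.sum_mul]
      _ = p k * p k * p k := by simp only [hsum, mul_one, (hp k).isIdempotentElem.eq]
    exact add_eq_right.mp h
  have hkjk : p k * p j * p k = 0 :=
    (Finset.sum_eq_zero_iff_of_nonneg fun l _ => hnonneg l).mp hrest j
      (Finset.mem_erase.mpr ⟨hjk, Finset.mem_univ j⟩)
  exact (CStarRing.star_mul_self_eq_zero_iff _).mp (hconj j k ▸ hkjk)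

theorem cubic_row_entries_orthogonal_general {A : Type*} [CStarAlgebra A]
    (n : ℕ) (u : Fin n → Fin n → A)
    (hU1 : ∀ i j, ∑ k, u i k * star (u j k) = if i = j then 1 else 0)
    (hnormal : ∀ i j, u i j * star (u i j) = star (u i j) * u i j)
    (hproj : ∀ i j, star (u i j * star (u i j)) = u i j * star (u i j) ∧
      (u i j * star (u i j)) * (u i j * star (u i j)) = u i j * star (u i j)) :
    ∀ i j k, j ≠ k → u i j * u i k = 0 := by
  intro i j k hjk
  let _ := CStarAlgebra.spectralOrder A
  have := CStarAlgebra.spectralOrderedRing A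
  have hP : ∀ l, IsStarProjection (u i l * star (u i l)) := fun l =>
    ⟨(hproj i l).2, (hproj i l).1⟩
  have hPP : u i j * star (u i j) * (u i k * star (u i k)) = 0 :=
    IsStarProjection.mul_eq_zero_of_sum_eq_one_s8 hP (by simpa using hU1 i i) hjk
  calc u i j * u i k
      = u i j * star (u i j) * u i j * (u i k * star (u i k) * u i k) := by
        rw [mul_star_self_mul_eq_self_of_isStarProjection (hP j),
          mul_star_self_mul_eq_self_of_isStarProjection (hP k)]
    _ = u i j * (star (u i j) * u i j * (u i k * star (u i k))) * u i k := by noncomm_ring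
    _ = 0 := by rw [← hnormal, hPP, mul_zero, zero_mul]

/-- for a matrix `u` over a unital C*-algebra satisfying the level-`s`
cubic relations, entries on the same row are orthogonal: `u i j * u i k = 0` for `j ≠ k`. -/
theorem cubic_row_entries_orthogonal {A : Type*} [CStarAlgebra A]
    (s n : ℕ) (hs : 1 ≤ s) (hn : 1 ≤ n) (u : Fin n → Fin n → A)
    (hU1 : ∀ i j, ∑ k, u i k * star (u j k) = if i = j then 1 else 0)
    (hU2 : ∀ i j, ∑ k, star (u k i) * u k j = if i = j then 1 else 0)
    (hT1 : ∀ i j, ∑ k, u k i * star (u k j) = if i = j then 1 else 0)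
    (hT2 : ∀ i j, ∑ k, star (u i k) * u j k = if i = j then 1 else 0)
    (hnormal : ∀ i j, u i j * star (u i j) = star (u i j) * u i j)
    (hproj : ∀ i j, star (u i j * star (u i j)) = u i j * star (u i j) ∧
      (u i j * star (u i j)) * (u i j * star (u i j)) = u i j * star (u i j))
    (hpow : ∀ i j, u i j ^ s = u i j * star (u i j)) :
    ∀ i j k, j ≠ k → u i j * u i k = 0 :=
  cubic_row_entries_orthogonal_general n u hU1 hnormal hproj
end

section
/- Let a be an element of a C*-algebra and let s ≥ 2 be an integer. If a a* is a projection and a^s = a a*, then a is normal, i.e., a a* = a* a. -/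
/-- if `a a*` is a projection and `a ^ s = a a*` for some `s ≥ 2`,
then `a` is normal: `a a* = a* a`. -/
theorem normality_redundant {A : Type*} [CStarAlgebra A]
    (a : A) (s : ℕ) (hs : 2 ≤ s)
    (hproj : star (a * star a) = a * star a ∧ (a * star a) * (a * star a) = a * star a)
    (hpow : a ^ s = a * star a) :
    a * star a = star a * a := by
  obtain ⟨hpstar, hp2⟩ := hproj
  set p := a * star a with hp
  -- a commutes with p
  have hcomm : a * p = p * a := by
    rw [← hpow, ← pow_succ, ← pow_succ']
  have hapap : a * p * star a = p := by
    rw [hcomm, mul_assoc, ← hp]; exact hp2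
  have h1 : a * (p * star a) = p := by rw [← mul_assoc]; exact hapap
  have h2 : a * p * (p * star a) = p := by
    have : a * p * (p * star a) = a * (p * p) * star a := by
      simp only [mul_assoc]
    rw [this, hp2]; exact hapap
  have hs1 : star (a - a * p) = star a - p * star a := by
    rw [star_sub, star_mul, hpstar]
  have hx : (a - a * p) * star (a - a * p) = 0 := by
    rw [hs1, mul_sub, sub_mul, sub_mul, h1, hapap, h2, ← hp]
    abel
  have hap : a = a * p := by
    have := CStarRing.mul_star_self_eq_zero_iff (a - a * p) |>.mp hx
    linear_combination (norm := noncomm_ring) this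
  have hsa : star a = p * star a := by
    conv_lhs => rw [hap, star_mul, hpstar]
  have hs' : a ^ (s - 1) * a = p := by
    rw [← pow_succ, Nat.sub_add_cancel (by omega), hpow]
  have h4 : a ^ (s - 1) * p = a ^ (s - 1) := by
    have he : a ^ (s - 1) = a ^ (s - 2) * a := by
      rw [← pow_succ]; congr 1; omega
    rw [he, mul_assoc, ← hap]
  have hstar_eq : star a = a ^ (s - 1) := by
    rw [hsa, ← hs', mul_assoc, ← hp, h4]
  rw [hstar_eq, hs']
end

section
/- Let A be a unital associative algebra over ℂ, let Δ : A → A ⊗ A be a unital algebra homomorphism, and let u_ij (1 ≤ i,j ≤ n) be elements of A such that Δ(u_ij) = Σ_{l=1}^n u_il ⊗ u_lj for all i,j, and such that u_{aj} u_{bj} = 0 whenever a ≠ b (for every column j). Then for every integer k ≥ 1 and all i,j one has Δ(u_ij^k) = Σ_{l=1}^n u_il^k ⊗ u_lj^k. -/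
open scoped TensorProduct

/-- if `Δ : A → A ⊗ A` is a unital algebra homomorphism with
`Δ(u_ij) = Σ_l u_il ⊗ u_lj` and the entries of each column of `u` are pairwise
orthogonal, then `Δ(u_ij^k) = Σ_l u_il^k ⊗ u_lj^k` for every `k ≥ 1`. -/
theorem comultiplication_of_entry_powers {A : Type*} [Ring A] [Algebra ℂ A]
    (n : ℕ) (Δ : A →ₐ[ℂ] A ⊗[ℂ] A) (u : Fin n → Fin n → A)
    (hΔ : ∀ i j, Δ (u i j) = ∑ l, u i l ⊗ₜ[ℂ] u l j)
    (hcol : ∀ (j : Fin n) (a b : Fin n), a ≠ b → u a j * u b j = 0) :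
    ∀ k : ℕ, 1 ≤ k → ∀ i j, Δ (u i j ^ k) = ∑ l, (u i l ^ k) ⊗ₜ[ℂ] (u l j ^ k) := by
  intro k hk
  induction k, hk using Nat.le_induction with
  | base => intro i j; simpa using hΔ i j
  | succ k hk ih =>
    intro i j
    have h1 : Δ (u i j ^ (k + 1)) = Δ (u i j ^ k) * Δ (u i j) := by
      rw [pow_succ, map_mul]
    rw [h1, ih i j, hΔ i j, Finset.sum_mul_sum]
    refine Finset.sum_congr rfl fun l _ => ?_
    rw [Finset.sum_eq_single l]
    · rw [Algebra.TensorProduct.tmul_mul_tmul, ← pow_succ, ← pow_succ]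
    · intro m _ hml
      have hz : u l j ^ k * u m j = 0 := by
        obtain ⟨k', rfl⟩ := Nat.exists_eq_add_of_le hk
        rw [add_comm, pow_succ, mul_assoc, hcol j l m (Ne.symm hml), mul_zero]
      rw [Algebra.TensorProduct.tmul_mul_tmul, hz, TensorProduct.tmul_zero]
    · intro h; exact absurd (Finset.mem_univ l) h
end

section
/- Let s ≥ 1 and let F be the free monoid of words over ℤ/sℤ. For a word z = i_1…i_k let z̄ = (-i_k)…(-i_1), and for nonempty words v = v'i and w = jw' (ending in the letter i and beginning with the letter j respectively) let v·w = v'(i+j)w'. On the free ℤ-module ℤA with basis {a_x : x ∈ F}, define a ℤ-bilinear product by a_x ⊗ a_y = Σ_{(v,z,w) : x = vz, y = z̄w} (a_{vw} + a_{v·w}), where the sum runs over all ways of writing x = vz and y = z̄w as concatenations, and where the term a_{v·w} is omitted whenever v or w is the empty word. Then this product is associative with unit a_∅ (the basis element of the empty word), so that (ℤA, +, ⊗) is an associative unital ring. -/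
/-!
The elements `g` with `(f ⊗ g) ⊗ h = f ⊗ (g ⊗ h)` for all `f, h` (the middle nucleus) form an
additive subgroup that contains `a_∅` and is closed under `⊗`. It contains every letter `a_k`:
by the recursion `a_{xl} ⊗ a_{kz} = a_{xlkz} + a_{x(l+k)z} + [k = -l] a_x ⊗ a_z`, both
`(a_{xl} ⊗ a_k) ⊗ a_{hz}` and `a_{xl} ⊗ (a_k ⊗ a_{hz})` expand into the same six terms. Since
`a_{wmk} = a_{wm} ⊗ a_k - a_{w(m+k)} - [k = -m] a_w`, induction on the length of words shows that
every basis element, hence everything, lies in the middle nucleus.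
-/

/-- The involution on words over `ℤ/sℤ`: `(i_1 … i_k)⁻ = (-i_k) … (-i_1)`. -/
def wordInv (s : ℕ) (x : List (ZMod s)) : List (ZMod s) :=
  (x.map fun a => -a).reverse

/-- The fusion term: for nonempty `v = v'i` and `w = jw'`, the basis element of
`v · w = v'(i+j)w'`; it is `0` (omitted) when `v` or `w` is empty. -/
noncomputable def fuseTerm (s : ℕ) (v w : List (ZMod s)) : List (ZMod s) →₀ ℤ :=
  match v.getLast?, w with
  | some i, j :: w' => Finsupp.single (v.dropLast ++ (i + j) :: w') 1
  | _, _ => 0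

/-- The product of two basis elements `a_x ⊗ a_y`: the sum over all decompositions
`x = vz`, `y = z̄w` of `a_{vw} + a_{v·w}` (the second term omitted when `v` or `w`
is empty). Decompositions are parametrized by the length `t` of `z`. -/
noncomputable def basisMul (s : ℕ) (x y : List (ZMod s)) : List (ZMod s) →₀ ℤ :=
  ∑ t ∈ Finset.range (min x.length y.length + 1),
    if y.take t = wordInv s (x.drop (x.length - t)) then
      Finsupp.single (x.take (x.length - t) ++ y.drop t) 1 +
        fuseTerm s (x.take (x.length - t)) (y.drop t)
    else 0

/-- The `ℤ`-bilinear extension of `basisMul` to the free `ℤ`-module on the words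
over `ℤ/sℤ`. -/
noncomputable def fusionMul (s : ℕ) (f g : List (ZMod s) →₀ ℤ) : List (ZMod s) →₀ ℤ :=
  f.sum fun x cx => g.sum fun y cy => (cx * cy) • basisMul s x y

open Finsupp

variable {s : ℕ}

lemma fuseTerm_nil_left (w : List (ZMod s)) : fuseTerm s [] w = 0 := by
  cases w <;> rfl

lemma fuseTerm_nil_right (v : List (ZMod s)) : fuseTerm s v [] = 0 := by
  unfold fuseTerm; cases v.getLast? <;> rfl

lemma fuseTerm_concat_cons (v w : List (ZMod s)) (i j : ZMod s) :
    fuseTerm s (v ++ [i]) (j :: w) = single (v ++ (i + j) :: w) 1 := by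
  simp [fuseTerm]

lemma basisMul_nil_left (y : List (ZMod s)) : basisMul s [] y = single y 1 := by
  simp [basisMul, fuseTerm_nil_left, wordInv]

lemma basisMul_nil_right (x : List (ZMod s)) : basisMul s x [] = single x 1 := by
  simp [basisMul, fuseTerm_nil_right, wordInv]

noncomputable def basisMulTerm (s : ℕ) (x y : List (ZMod s)) (t : ℕ) : List (ZMod s) →₀ ℤ :=
  if y.take t = wordInv s (x.drop (x.length - t)) then
    single (x.take (x.length - t) ++ y.drop t) 1 + fuseTerm s (x.take (x.length - t)) (y.drop t)
  else 0

lemma basisMul_eq_sum (x y : List (ZMod s)) :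
    basisMul s x y = ∑ t ∈ Finset.range (min x.length y.length + 1), basisMulTerm s x y t :=
  rfl

lemma basisMulTerm_concat_cons_succ (x z : List (ZMod s)) (l k : ZMod s) (t : ℕ) :
    basisMulTerm s (x ++ [l]) (k :: z) (t + 1) = if k = -l then basisMulTerm s x z t else 0 := by
  have hle : x.length - t ≤ x.length := Nat.sub_le _ _
  have hsub : (x ++ [l]).length - (t + 1) = x.length - t := by simp
  rw [basisMulTerm, basisMulTerm, hsub, List.drop_append_of_le_length hle,
    List.take_append_of_le_length hle]
  by_cases hk : k = -l <;> simp [hk, wordInv]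

-- The empty overlap gives the first two terms; a nonempty one must begin by cancelling `l`
-- against `k`.
lemma basisMul_concat_cons (x z : List (ZMod s)) (l k : ZMod s) :
    basisMul s (x ++ [l]) (k :: z) =
      single (x ++ l :: k :: z) 1 + single (x ++ (l + k) :: z) 1 +
        if k = -l then basisMul s x z else 0 := by
  have hlen : min (x ++ [l]).length (k :: z).length = min x.length z.length + 1 := by
    simp [Nat.succ_min_succ]
  rw [basisMul_eq_sum, hlen, Finset.sum_range_succ']
  simp only [basisMulTerm_concat_cons_succ, Finset.sum_ite_irrel, Finset.sum_const_zero,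
    ← basisMul_eq_sum]
  simp [basisMulTerm, wordInv, List.take_of_length_le, fuseTerm_concat_cons, add_comm]

lemma basisMul_concat_singleton (x : List (ZMod s)) (l k : ZMod s) :
    basisMul s (x ++ [l]) [k] =
      single (x ++ [l] ++ [k]) 1 + single (x ++ [l + k]) 1 + if k = -l then single x 1 else 0 := by
  simp [basisMul_concat_cons, basisMul_nil_right]

lemma basisMul_singleton_cons (z : List (ZMod s)) (k h : ZMod s) :
    basisMul s [k] (h :: z) =
      single (k :: h :: z) 1 + single ((k + h) :: z) 1 + if h = -k then single z 1 else 0 := by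
  simpa [basisMul_nil_left] using basisMul_concat_cons [] z k h

noncomputable def fusionMulₗ (s : ℕ) :
    (List (ZMod s) →₀ ℤ) →ₗ[ℤ] (List (ZMod s) →₀ ℤ) →ₗ[ℤ] List (ZMod s) →₀ ℤ :=
  lsum ℤ fun x => LinearMap.toSpanSingleton ℤ _ <|
    lsum ℤ fun y => LinearMap.toSpanSingleton ℤ _ (basisMul s x y)

lemma fusionMulₗ_apply (f g : List (ZMod s) →₀ ℤ) : fusionMulₗ s f g = fusionMul s f g := by
  simp [fusionMulₗ, fusionMul, Finsupp.smul_sum, mul_smul]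

@[simp]
lemma fusionMulₗ_single_single (x y : List (ZMod s)) :
    fusionMulₗ s (single x 1) (single y 1) = basisMul s x y := by
  simp [fusionMulₗ]

lemma fusionMulₗ_one_left (f : List (ZMod s) →₀ ℤ) : fusionMulₗ s (single [] 1) f = f :=
  LinearMap.congr_fun (show fusionMulₗ s (single [] 1) = LinearMap.id by
    ext y; simp [basisMul_nil_left]) f

lemma fusionMulₗ_one_right (f : List (ZMod s) →₀ ℤ) : fusionMulₗ s f (single [] 1) = f :=
  LinearMap.congr_fun (show (fusionMulₗ s).flip (single [] 1) = LinearMap.id by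
    ext x; simp [basisMul_nil_right]) f

lemma fusionMulₗ_assoc_letter (x z : List (ZMod s)) (k : ZMod s) :
    fusionMulₗ s (fusionMulₗ s (single x 1) (single [k] 1)) (single z 1) =
      fusionMulₗ s (single x 1) (fusionMulₗ s (single [k] 1) (single z 1)) := by
  rcases z with _ | ⟨h, z⟩
  · simp only [fusionMulₗ_one_right]
  rcases x.eq_nil_or_concat' with rfl | ⟨x, l, rfl⟩
  · simp only [fusionMulₗ_one_left]
  have hcancel : (h = -(l + k)) ↔ (k + h = -l) := by
    constructor <;> intro e <;> linear_combination e
  simp only [fusionMulₗ_single_single, basisMul_concat_singleton, basisMul_singleton_cons,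
    map_add, LinearMap.add_apply]
  rw [apply_ite (fun g => fusionMulₗ s g (single (h :: z) 1)),
    apply_ite (fusionMulₗ s (single (x ++ [l]) 1))]
  simp only [map_zero, LinearMap.zero_apply, fusionMulₗ_single_single]
  rw [basisMul_concat_cons (x ++ [l]), basisMul_concat_cons x, basisMul_concat_cons x,
    basisMul_concat_cons x]
  simp only [List.append_assoc, List.cons_append, List.nil_append, hcancel, add_assoc]
  abel

def middleNucleus (s : ℕ) : AddSubgroup (List (ZMod s) →₀ ℤ) where
  carrier := {g | ∀ f h, fusionMulₗ s (fusionMulₗ s f g) h = fusionMulₗ s f (fusionMulₗ s g h)}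
  add_mem' {g₁ g₂} h₁ h₂ f h := by simp [h₁ f h, h₂ f h]
  zero_mem' f h := by simp
  neg_mem' {g} hg f h := by simp [hg f h]

lemma mem_middleNucleus_of_single {g : List (ZMod s) →₀ ℤ}
    (hg : ∀ x z, fusionMulₗ s (fusionMulₗ s (single x 1) g) (single z 1) =
      fusionMulₗ s (single x 1) (fusionMulₗ s g (single z 1))) :
    g ∈ middleNucleus s := by
  have : (fusionMulₗ s).compl₁₂ ((fusionMulₗ s).flip g) LinearMap.id =
      (fusionMulₗ s).compl₂ (fusionMulₗ s g) := by
    refine lhom_ext' fun x => LinearMap.ext_ring <| lhom_ext' fun z => LinearMap.ext_ring ?_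
    simpa using hg x z
  exact fun f h => LinearMap.congr_fun₂ this f h

lemma one_mem_middleNucleus : single [] 1 ∈ middleNucleus s := fun f h => by
  rw [fusionMulₗ_one_right, fusionMulₗ_one_left]

lemma fusionMulₗ_mem_middleNucleus {g₁ g₂ : List (ZMod s) →₀ ℤ} (h₁ : g₁ ∈ middleNucleus s)
    (h₂ : g₂ ∈ middleNucleus s) : fusionMulₗ s g₁ g₂ ∈ middleNucleus s := fun f h =>
  calc fusionMulₗ s (fusionMulₗ s f (fusionMulₗ s g₁ g₂)) h
      = fusionMulₗ s (fusionMulₗ s (fusionMulₗ s f g₁) g₂) h := by rw [h₁ f g₂]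
    _ = fusionMulₗ s (fusionMulₗ s f g₁) (fusionMulₗ s g₂ h) := h₂ _ h
    _ = fusionMulₗ s f (fusionMulₗ s g₁ (fusionMulₗ s g₂ h)) := h₁ f _
    _ = fusionMulₗ s f (fusionMulₗ s (fusionMulₗ s g₁ g₂) h) := by rw [h₂ g₁ h]

lemma single_letter_mem_middleNucleus (k : ZMod s) : single [k] 1 ∈ middleNucleus s :=
  mem_middleNucleus_of_single fun x z => fusionMulₗ_assoc_letter x z k

lemma single_concat_concat (w : List (ZMod s)) (m k : ZMod s) :
    single (w ++ [m] ++ [k]) 1 = fusionMulₗ s (single (w ++ [m]) 1) (single [k] 1) -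
      single (w ++ [m + k]) 1 - if k = -m then single w 1 else 0 := by
  rw [fusionMulₗ_single_single, basisMul_concat_singleton]
  abel

lemma single_mem_middleNucleus (y : List (ZMod s)) : single y 1 ∈ middleNucleus s := by
  induction hn : y.length using Nat.strong_induction_on generalizing y with
  | _ n ih =>
  rcases y.eq_nil_or_concat' with rfl | ⟨y, k, rfl⟩
  · exact one_mem_middleNucleus
  rcases y.eq_nil_or_concat' with rfl | ⟨w, m, rfl⟩
  · exact single_letter_mem_middleNucleus k
  subst hn
  rw [single_concat_concat]
  refine sub_mem (sub_mem (fusionMulₗ_mem_middleNucleus (ih _ ?_ _ rfl)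
    (single_letter_mem_middleNucleus k)) (ih _ ?_ _ rfl)) ?_
  · simp
  · simp
  · split_ifs
    · exact ih _ (by simp) _ rfl
    · exact zero_mem _

lemma middleNucleus_eq_top : middleNucleus s = ⊤ := by
  refine (AddSubgroup.eq_top_iff' _).2 fun g => ?_
  induction g using Finsupp.induction_linear with
  | zero => exact zero_mem _
  | add f g hf hg => exact add_mem hf hg
  | single y c => simpa using zsmul_mem (single_mem_middleNucleus y) c

lemma fusionMulₗ_assoc (f g h : List (ZMod s) →₀ ℤ) :
    fusionMulₗ s (fusionMulₗ s f g) h = fusionMulₗ s f (fusionMulₗ s g h) :=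
  (middleNucleus_eq_top ▸ AddSubgroup.mem_top g : g ∈ middleNucleus s) f h

theorem fusionMul_associative_unital_general (s : ℕ) :
    (∀ f g h : List (ZMod s) →₀ ℤ,
      fusionMul s (fusionMul s f g) h = fusionMul s f (fusionMul s g h)) ∧
    (∀ f : List (ZMod s) →₀ ℤ, fusionMul s (Finsupp.single [] 1) f = f) ∧
    (∀ f : List (ZMod s) →₀ ℤ, fusionMul s f (Finsupp.single [] 1) = f) := by
  simp only [← fusionMulₗ_apply]
  exact ⟨fusionMulₗ_assoc, fusionMulₗ_one_left, fusionMulₗ_one_right⟩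

/-- the fusion product on the free `ℤ`-module with basis the words
over `ℤ/sℤ` is associative, with unit the basis element of the empty word; thus
`(ℤA, +, ⊗)` is an associative unital ring. -/
theorem fusionMul_associative_unital (s : ℕ) (hs : 1 ≤ s) :
    (∀ f g h : List (ZMod s) →₀ ℤ,
      fusionMul s (fusionMul s f g) h = fusionMul s f (fusionMul s g h)) ∧
    (∀ f : List (ZMod s) →₀ ℤ, fusionMul s (Finsupp.single [] 1) f = f) ∧
    (∀ f : List (ZMod s) →₀ ℤ, fusionMul s f (Finsupp.single [] 1) = f) :=
  fusionMul_associative_unital_general s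
end

section
/- Let s ≥ 1 and let F be the free monoid of words over ℤ/sℤ, with involution (i_1…i_k)^- = (-i_k)…(-i_1). In the free ℤ-module ℤA with basis {a_x : x ∈ F}, equipped with the ℤ-bilinear product a_x ⊗ a_y = Σ_{(v,z,w) : x = vz, y = z̄w} (a_{vw} + a_{v·w}) (with the term a_{v·w} omitted whenever v or w is empty), the coefficient of the basis element a_∅ of the empty word in a_x ⊗ a_{ȳ} equals 1 if x = y and equals 0 if x ≠ y, for all words x, y ∈ F. -/
lemma fuseTerm_apply_nil (s : ℕ) (v w : List (ZMod s)) : fuseTerm s v w [] = 0 := by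
  unfold fuseTerm
  rcases v.getLast? with _ | i <;> rcases w with _ | ⟨j, w'⟩ <;> simp

lemma wordInv_length (s : ℕ) (x : List (ZMod s)) : (wordInv s x).length = x.length := by
  simp [wordInv]

lemma wordInv_involutive (s : ℕ) : Function.Involutive (wordInv s) := by
  intro x
  simp [wordInv, List.map_reverse]

/-- Only the decomposition with `v = w = ∅`, i.e. `z = x` and `y = x̄`, produces the empty
word; fusion terms never do. -/
lemma basisMul_summand_apply_nil (s : ℕ) (x y : List (ZMod s)) {t : ℕ}
    (htx : t ≤ x.length) (hty : t ≤ y.length) :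
    ((if y.take t = wordInv s (x.drop (x.length - t)) then
        Finsupp.single (x.take (x.length - t) ++ y.drop t) 1 +
          fuseTerm s (x.take (x.length - t)) (y.drop t)
      else 0) : List (ZMod s) →₀ ℤ) [] =
      if t = x.length ∧ y = wordInv s x then 1 else 0 := by
  rw [apply_ite (fun f : List (ZMod s) →₀ ℤ => f [])]
  simp only [Finsupp.add_apply, fuseTerm_apply_nil, add_zero, Finsupp.zero_apply,
    Finsupp.single_apply, ← List.length_eq_zero_iff, List.length_append, List.length_take,
    List.length_drop]
  by_cases htx' : t = x.length
  · subst htx'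
    by_cases hty' : y.length = x.length
    · simp [List.take_of_length_le, hty']
    · have hyx : y ≠ wordInv s x := fun h => hty' (by rw [h, wordInv_length])
      simp [hyx]
      omega
  · simp [htx']
    omega

lemma basisMul_apply_nil (s : ℕ) (x y : List (ZMod s)) :
    basisMul s x y [] = if y = wordInv s x then 1 else 0 := by
  rw [basisMul, Finsupp.finsetSum_apply, Finset.sum_congr rfl fun t ht =>
    basisMul_summand_apply_nil s x y (le_min_iff.1 (Finset.mem_range_succ_iff.1 ht)).1
      (le_min_iff.1 (Finset.mem_range_succ_iff.1 ht)).2]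
  split_ifs with hyx
  · subst hyx
    simp [wordInv_length]
  · simp [hyx]

theorem fusion_unit_multiplicity_general (s : ℕ) (x y : List (ZMod s)) :
    basisMul s x (wordInv s y) [] = if x = y then 1 else 0 := by
  simp only [basisMul_apply_nil, (wordInv_involutive s).injective.eq_iff, eq_comm]

/-- the coefficient of the empty word in `a_x ⊗ a_{ȳ}` is `1` if
`x = y` and `0` otherwise: the linear form counting the multiplicity of the unit
is positive definite on the fusion ring. -/
theorem fusion_unit_multiplicity (s : ℕ) (hs : 1 ≤ s) (x y : List (ZMod s)) :
    basisMul s x (wordInv s y) [] = if x = y then 1 else 0 :=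
  fusion_unit_multiplicity_general s x y
end

section
/- Let s ≥ 1, let k ≥ 1, and let i_1,…,i_k ∈ ℤ/sℤ. In the free ℤ-module ℤA with basis {a_x : x a word over ℤ/sℤ}, equipped with the associative ℤ-bilinear product a_x ⊗ a_y = Σ_{(v,z,w) : x = vz, y = z̄w} (a_{vw} + a_{v·w}) (term a_{v·w} omitted whenever v or w is empty), consider the product P = (a_{i_1} + δ_{i_1,0}·a_∅) ⊗ (a_{i_2} + δ_{i_2,0}·a_∅) ⊗ ⋯ ⊗ (a_{i_k} + δ_{i_k,0}·a_∅), where a_{i_r} denotes the basis element of the one-letter word i_r and δ_{i_r,0} = 1 if i_r = 0 in ℤ/sℤ and 0 otherwise. Then the coefficient of a_∅ in P equals the number of noncrossing partitions π of {1,…,k} such that for every block B of π, the sum Σ_{r ∈ B} i_r equals 0 in ℤ/sℤ. -/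
/-- `P` is a partition of `{1, …, k}`, encoded as a finite set of blocks. -/
def IsPartitionOfFin (k : ℕ) (P : Finset (Finset (Fin k))) : Prop :=
  ∅ ∉ P ∧ ∀ x : Fin k, ∃! B, B ∈ P ∧ x ∈ B

/-- A partition of `{1, …, k}` is noncrossing if there are no `a < b < c < d` with
`a, c` in one block and `b, d` in a different block. -/
def IsNoncrossingFin (k : ℕ) (P : Finset (Finset (Fin k))) : Prop :=
  ¬ ∃ a b c d : Fin k, a < b ∧ b < c ∧ c < d ∧
      (∃ B ∈ P, a ∈ B ∧ c ∈ B) ∧ (∃ B ∈ P, b ∈ B ∧ d ∈ B) ∧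
        ¬ (∃ B ∈ P, a ∈ B ∧ b ∈ B)

/-!
Read the product from the right. Left multiplication by `e_c = a_c + δ_{c,0} a_∅` changes the
coefficient of `a_w` by four moves: prepend a letter `c` to `w`, add `c` to the first letter of
`w`, delete a first letter `-c`, or, when `c = 0`, leave `w` alone. These are the four ways a
position can enter a noncrossing partition built from right to left: as the last element of a
new block, as an inner element of the leftmost open block, as the first element of that block,
closing it once its sum vanishes, or as a singleton block. Keeping the sums of the open blocks
as a stack word `w`, the coefficient of `a_w` in `e_{i_r} ⊗ ⋯ ⊗ e_{i_{k-1}}` thus counts the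
partial noncrossing partitions of `{r, …, k-1}` with stack `w`; for `r = 0` and `w = ∅` these
are the noncrossing partitions all of whose blocks have index sum `0`.
-/

namespace Finset

variable {α : Type*} [DecidableEq α]

lemma insert_ne_singleton {s : Finset α} {x : α} (hx : x ∉ s) (hs : s.Nonempty) :
    insert x s ≠ {x} := fun h => by
  obtain ⟨y, hy⟩ := hs
  obtain rfl := mem_singleton.1 (h ▸ mem_insert_of_mem hy)
  exact hx hy

lemma exists_eq_insert_of_mem {s : Finset α} {x : α} (hx : x ∈ s) :
    ∃ t, x ∉ t ∧ s = insert x t :=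
  ⟨s.erase x, notMem_erase x s, (insert_erase hx).symm⟩

lemma eq_of_insert_eq_insert_of_notMem {s t : Finset α} {x : α} (hs : x ∉ s) (ht : x ∉ t)
    (h : insert x s = insert x t) : s = t := by
  rw [← erase_insert hs, h, erase_insert ht]

lemma eq_and_eq_of_insert_eq_insert {B₁ B₂ : Finset α} {κ₁ κ₂ : Finset (Finset α)} {x : α}
    (h : insert B₁ κ₁ = insert B₂ κ₂) (hB₁ : x ∈ B₁) (hB₂ : x ∈ B₂) (hκ₁ : ∀ C ∈ κ₁, x ∉ C)
    (hκ₂ : ∀ C ∈ κ₂, x ∉ C) : B₁ = B₂ ∧ κ₁ = κ₂ := by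
  obtain rfl : B₁ = B₂ := by
    rcases mem_insert.1 (h ▸ mem_insert_self B₁ κ₁) with hB | hB
    exacts [hB, absurd hB₁ (hκ₂ B₁ hB)]
  exact ⟨rfl, by rw [← erase_insert fun hB => hκ₁ B₁ hB hB₁, h,
    erase_insert fun hB => hκ₂ B₁ hB hB₁]⟩

end Finset

namespace FusionNC

lemma basisMul_nil_left (s : ℕ) (y : List (ZMod s)) :
    basisMul s [] y = Finsupp.single y 1 := by
  simp [basisMul, wordInv, fuseTerm]

lemma basisMul_singleton_apply (s : ℕ) (c : ZMod s) (y w : List (ZMod s)) :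
    basisMul s [c] y w =
      (if w.head? = some c ∧ y = w.tail then 1 else 0) +
        (if w ≠ [] ∧ y = (w.headI - c) :: w.tail then 1 else 0) +
        (if y = -c :: w then 1 else 0) := by
  rcases y with _ | ⟨j, y⟩ <;> rcases w with _ | ⟨a, w⟩ <;>
    simp [basisMul, Finset.sum_range_succ, wordInv, fuseTerm, Finsupp.single_apply] <;>
    grind

lemma fusionMul_add_left (s : ℕ) (f₁ f₂ g : List (ZMod s) →₀ ℤ) :
    fusionMul s (f₁ + f₂) g = fusionMul s f₁ g + fusionMul s f₂ g :=
  Finsupp.sum_add_index' (by simp) fun _ _ _ => by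
    simp only [add_mul, add_smul, Finsupp.sum_add]

lemma fusionMul_single_nil_left (s : ℕ) (g : List (ZMod s) →₀ ℤ) :
    fusionMul s (Finsupp.single [] 1) g = g := by
  simp [fusionMul, basisMul_nil_left, Finsupp.smul_single]

lemma fusionMul_singleton_left_apply (s : ℕ) (c : ZMod s) (g : List (ZMod s) →₀ ℤ)
    (w : List (ZMod s)) :
    fusionMul s (Finsupp.single [c] 1) g w =
      (if w.head? = some c then g w.tail else 0) +
        (if w = [] then 0 else g ((w.headI - c) :: w.tail)) + g (-c :: w) := by
  rw [fusionMul, Finsupp.sum_single_index (by simp), Finsupp.sum_apply]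
  simp only [Finsupp.smul_apply, smul_eq_mul, one_mul, basisMul_singleton_apply, mul_add,
    mul_ite, mul_one, mul_zero, Finsupp.sum_add]
  rcases eq_or_ne w [] with rfl | hw
  · simp only [List.head?_nil, reduceCtorEq, false_and, ne_eq, not_true_eq_false, if_false,
      if_true, Finsupp.sum_fun_zero, Finsupp.sum_ite_self_eq']
  · by_cases hc : w.head? = some c <;>
      simp only [hc, hw, ne_eq, not_false_eq_true, true_and, false_and, if_true, if_false,
        Finsupp.sum_ite_self_eq', Finsupp.sum_fun_zero]

noncomputable def generator (s : ℕ) (c : ZMod s) : List (ZMod s) →₀ ℤ :=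
  Finsupp.single [c] 1 + if c = 0 then Finsupp.single [] 1 else 0

lemma fusionMul_generator_apply (s : ℕ) (c : ZMod s) (g : List (ZMod s) →₀ ℤ)
    (w : List (ZMod s)) :
    fusionMul s (generator s c) g w =
      (if w.head? = some c then g w.tail else 0) +
        (if w = [] then 0 else g ((w.headI - c) :: w.tail)) + g (-c :: w) +
        (if c = 0 then g w else 0) := by
  rw [generator, fusionMul_add_left, Finsupp.add_apply, fusionMul_singleton_left_apply]
  congr 1
  split_ifs
  · rw [fusionMul_single_nil_left]
  · rw [fusionMul, Finsupp.sum_zero_index, Finsupp.zero_apply]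

variable {s k : ℕ}

def blockSum (i : Fin k → ZMod s) (S : Finset (Fin k)) : ZMod s := ∑ x ∈ S, i x

def LeftOf (S T : Finset (Fin k)) : Prop := ∀ a ∈ S, ∀ b ∈ T, a < b

def Straddles (C : Finset (Fin k)) (a : Fin k) : Prop := ∃ b ∈ C, ∃ d ∈ C, b < a ∧ a < d

def Crosses (C C' : Finset (Fin k)) : Prop :=
  ∃ a b c d : Fin k, a < b ∧ b < c ∧ c < d ∧ a ∈ C ∧ c ∈ C ∧ b ∈ C' ∧ d ∈ C'

/-- A partial noncrossing partition of `{r, …, k-1}`: `κ` are the closed blocks, of index sum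
`0`, and `σ` the open blocks, which may still receive elements `< r`, listed from left to right;
`w` is the word of their index sums. An open block may therefore neither interleave with another
one nor lie inside the span of a closed block. -/
structure IsNCState (i : Fin k → ZMod s) (r : ℕ) (w : List (ZMod s))
    (σ : List (Finset (Fin k))) (κ : Finset (Finset (Fin k))) : Prop where
  word_eq : w = σ.map (blockSum i)
  open_nonempty : ∀ S ∈ σ, S.Nonempty
  closed_nonempty : ∀ C ∈ κ, C.Nonempty
  le_iff (y : Fin k) : r ≤ (y : ℕ) ↔ (∃ S ∈ σ, y ∈ S) ∨ ∃ C ∈ κ, y ∈ C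
  disjoint_open_closed : ∀ S ∈ σ, ∀ C ∈ κ, Disjoint S C
  disjoint_closed : (κ : Set (Finset (Fin k))).Pairwise Disjoint
  open_sorted : σ.Pairwise LeftOf
  not_straddles : ∀ S ∈ σ, ∀ C ∈ κ, ∀ a ∈ S, ¬ Straddles C a
  not_crosses : (κ : Set (Finset (Fin k))).Pairwise fun C C' => ¬ Crosses C C'
  closed_sum : ∀ C ∈ κ, blockSum i C = 0

abbrev NCState (i : Fin k → ZMod s) (r : ℕ) (w : List (ZMod s)) :=
  {p : List (Finset (Fin k)) × Finset (Finset (Fin k)) // IsNCState i r w p.1 p.2}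

variable {i : Fin k → ZMod s} {r : ℕ} {w : List (ZMod s)} {a : ZMod s}
  {σ : List (Finset (Fin k))} {κ : Finset (Finset (Fin k))} {S C : Finset (Fin k)} {y : Fin k}

lemma le_iff_eq_or_succ_le (hr : r < k) : r ≤ (y : ℕ) ↔ y = ⟨r, hr⟩ ∨ r + 1 ≤ (y : ℕ) := by
  simp only [Fin.ext_iff]; omega

lemma succ_le_iff_le_and_ne (hr : r < k) : r + 1 ≤ (y : ℕ) ↔ r ≤ (y : ℕ) ∧ y ≠ ⟨r, hr⟩ := by
  simp only [ne_eq, Fin.ext_iff]; omega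

lemma blockSum_insert (hy : y ∉ S) : blockSum i (insert y S) = i y + blockSum i S :=
  Finset.sum_insert hy

lemma root_lt_of_le (hr : r < k) (hy : r ≤ (y : ℕ)) (hne : y ≠ ⟨r, hr⟩) :
    (⟨r, hr⟩ : Fin k) < y :=
  lt_of_le_of_ne hy hne.symm

lemma succ_le_iff_of_le_iff (hr : r < k) {P : Prop} (hP : P → y ≠ ⟨r, hr⟩)
    (h : r ≤ (y : ℕ) ↔ y = ⟨r, hr⟩ ∨ P) : r + 1 ≤ (y : ℕ) ↔ P := by
  rw [succ_le_iff_le_and_ne hr, h]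
  tauto

lemma not_straddles_singleton (a y : Fin k) : ¬ Straddles {y} a := by
  rintro ⟨b, hb, d, hd, hba, had⟩
  rw [Finset.mem_singleton] at hb hd
  subst hb hd
  exact lt_asymm hba had

lemma not_crosses_singleton_left (y : Fin k) (C : Finset (Fin k)) : ¬ Crosses {y} C := by
  rintro ⟨a, b, c, d, hab, hbc, -, ha, hc, -⟩
  rw [Finset.mem_singleton] at ha hc
  subst ha hc
  exact lt_asymm hab hbc

lemma not_crosses_singleton_right (y : Fin k) (C : Finset (Fin k)) : ¬ Crosses C {y} := by
  rintro ⟨a, b, c, d, -, hbc, hcd, -, -, hb, hd⟩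
  rw [Finset.mem_singleton] at hb hd
  subst hb hd
  exact lt_asymm hbc hcd

namespace IsNCState

lemma le_of_mem_open (h : IsNCState i r w σ κ) (hS : S ∈ σ) (hy : y ∈ S) : r ≤ (y : ℕ) :=
  (h.le_iff y).2 (Or.inl ⟨S, hS, hy⟩)

lemma le_of_mem_closed (h : IsNCState i r w σ κ) (hC : C ∈ κ) (hy : y ∈ C) : r ≤ (y : ℕ) :=
  (h.le_iff y).2 (Or.inr ⟨C, hC, hy⟩)

lemma not_mem_closed_of_mem_open (h : IsNCState i r w σ κ) (hS : S ∈ σ) (hC : C ∈ κ)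
    (hy : y ∈ S) : y ∉ C :=
  Finset.disjoint_left.1 (h.disjoint_open_closed S hS C hC) hy

lemma root_not_mem_open (hr : r < k) (h : IsNCState i (r + 1) w σ κ) (hS : S ∈ σ) :
    (⟨r, hr⟩ : Fin k) ∉ S := fun hx => by
  simpa using h.le_of_mem_open hS hx

lemma root_not_mem_closed (hr : r < k) (h : IsNCState i (r + 1) w σ κ) (hC : C ∈ κ) :
    (⟨r, hr⟩ : Fin k) ∉ C := fun hx => by
  simpa using h.le_of_mem_closed hC hx

lemma root_lt (hr : r < k) (h : IsNCState i (r + 1) w σ κ) :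
    ((∃ S ∈ σ, y ∈ S) ∨ ∃ C ∈ κ, y ∈ C) → (⟨r, hr⟩ : Fin k) < y :=
  (h.le_iff y).2

lemma root_not_straddles (hr : r < k) (h : IsNCState i (r + 1) w σ κ) (hC : C ∈ κ) :
    ¬ Straddles C ⟨r, hr⟩ := fun ⟨b, hb, _, _, (hbx : (b : ℕ) < r), _⟩ => by
  have := h.le_of_mem_closed hC hb
  omega

lemma push (hr : r < k) (h : IsNCState i (r + 1) w σ κ) :
    IsNCState i r (i ⟨r, hr⟩ :: w) ({⟨r, hr⟩} :: σ) κ where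
  word_eq := by simp [h.word_eq, blockSum]
  open_nonempty := List.forall_mem_cons.2 ⟨Finset.singleton_nonempty _, h.open_nonempty⟩
  closed_nonempty := h.closed_nonempty
  le_iff y := by
    rw [le_iff_eq_or_succ_le hr, h.le_iff]
    simp [or_assoc]
  disjoint_open_closed := by
    simpa [Finset.disjoint_singleton_left] using
      ⟨fun C hC => h.root_not_mem_closed hr hC, h.disjoint_open_closed⟩
  disjoint_closed := h.disjoint_closed
  open_sorted := List.pairwise_cons.2
    ⟨fun S hS a ha b hb => Finset.mem_singleton.1 ha ▸ h.le_of_mem_open hS hb, h.open_sorted⟩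
  not_straddles := by
    simpa using ⟨fun C hC => h.root_not_straddles hr hC, h.not_straddles⟩
  not_crosses := h.not_crosses
  closed_sum := h.closed_sum

lemma fuse (hr : r < k) {S₀ : Finset (Fin k)} (h : IsNCState i (r + 1) (a :: w) (S₀ :: σ) κ) :
    IsNCState i r ((i ⟨r, hr⟩ + a) :: w) (insert ⟨r, hr⟩ S₀ :: σ) κ where
  word_eq := by
    have hw := h.word_eq
    simp only [List.map_cons, List.cons.injEq] at hw
    simp [hw, blockSum_insert (h.root_not_mem_open hr List.mem_cons_self)]
  open_nonempty := List.forall_mem_cons.2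
    ⟨Finset.insert_nonempty _ _, fun S hS => h.open_nonempty S (List.mem_cons_of_mem _ hS)⟩
  closed_nonempty := h.closed_nonempty
  le_iff y := by
    rw [le_iff_eq_or_succ_le hr, h.le_iff]
    simp [or_assoc]
  disjoint_open_closed := by
    have := h.disjoint_open_closed
    simp only [List.forall_mem_cons, Finset.disjoint_insert_left] at this ⊢
    exact ⟨fun C hC => ⟨h.root_not_mem_closed hr hC, this.1 C hC⟩, this.2⟩
  disjoint_closed := h.disjoint_closed
  open_sorted := by
    have := List.pairwise_cons.1 h.open_sorted
    refine List.pairwise_cons.2 ⟨fun S hS a ha b hb => ?_, this.2⟩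
    rcases Finset.mem_insert.1 ha with rfl | ha
    · exact h.root_lt hr (Or.inl ⟨S, List.mem_cons_of_mem _ hS, hb⟩)
    · exact this.1 S hS a ha b hb
  not_straddles := by
    refine List.forall_mem_cons.2 ⟨fun C hC a ha => ?_, fun S hS => h.not_straddles S
      (List.mem_cons_of_mem _ hS)⟩
    rcases Finset.mem_insert.1 ha with rfl | ha
    · exact h.root_not_straddles hr hC
    · exact h.not_straddles S₀ List.mem_cons_self C hC a ha
  not_crosses := h.not_crosses
  closed_sum := h.closed_sum

lemma not_crosses_insert_root (hr : r < k) {S₀ : Finset (Fin k)}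
    (h : IsNCState i (r + 1) w (S₀ :: σ) κ) (hC : C ∈ κ) :
    ¬ Crosses (insert ⟨r, hr⟩ S₀) C ∧ ¬ Crosses C (insert ⟨r, hr⟩ S₀) := by
  have hS₀ := h.not_straddles S₀ List.mem_cons_self C hC
  constructor
  · rintro ⟨a, b, c, d, -, hbc, hcd, -, hc, hb, hd⟩
    rcases Finset.mem_insert.1 hc with rfl | hc
    · exact lt_asymm hbc (h.root_lt hr (Or.inr ⟨C, hC, hb⟩))
    · exact hS₀ c hc ⟨b, hb, d, hd, hbc, hcd⟩
  · rintro ⟨a, b, c, d, hab, hbc, -, ha, hc, hb, -⟩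
    rcases Finset.mem_insert.1 hb with rfl | hb
    · exact lt_asymm hab (h.root_lt hr (Or.inr ⟨C, hC, ha⟩))
    · exact hS₀ b hb ⟨a, ha, c, hc, hab, hbc⟩

lemma pop (hr : r < k) {S₀ : Finset (Fin k)} (h : IsNCState i (r + 1) (a :: w) (S₀ :: σ) κ)
    (ha : i ⟨r, hr⟩ + a = 0) :
    IsNCState i r w σ (insert (insert ⟨r, hr⟩ S₀) κ) := by
  have hw := h.word_eq
  simp only [List.map_cons, List.cons.injEq] at hw
  have hxS₀ : (⟨r, hr⟩ : Fin k) ∉ S₀ := h.root_not_mem_open hr List.mem_cons_self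
  have hsorted := List.pairwise_cons.1 h.open_sorted
  refine
  { word_eq := hw.2
    open_nonempty := fun S hS => h.open_nonempty S (List.mem_cons_of_mem _ hS)
    closed_nonempty := Finset.forall_mem_insert _ _ _ |>.2
      ⟨Finset.insert_nonempty _ _, h.closed_nonempty⟩
    le_iff := fun y => by
      rw [le_iff_eq_or_succ_le hr, h.le_iff]
      simp [or_and_right, exists_or, or_assoc, or_left_comm]
    disjoint_open_closed := fun S hS => (Finset.forall_mem_insert _ _ _).2
      ⟨Finset.disjoint_insert_right.2 ⟨h.root_not_mem_open hr (List.mem_cons_of_mem _ hS),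
        Finset.disjoint_left.2 fun b hb hb' => lt_irrefl b (hsorted.1 S hS b hb' b hb)⟩,
        h.disjoint_open_closed S (List.mem_cons_of_mem _ hS)⟩
    disjoint_closed := ?_
    open_sorted := hsorted.2
    not_straddles := fun S hS => (Finset.forall_mem_insert _ _ _).2 ⟨?_,
      h.not_straddles S (List.mem_cons_of_mem _ hS)⟩
    not_crosses := by
      rw [Finset.coe_insert, Set.pairwise_insert]
      exact ⟨h.not_crosses, fun C hC _ => h.not_crosses_insert_root hr hC⟩
    closed_sum := (Finset.forall_mem_insert _ _ _).2
      ⟨by rw [blockSum_insert hxS₀, ← hw.1, ha], h.closed_sum⟩ }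
  · rw [Finset.coe_insert, Set.pairwise_insert]
    refine ⟨h.disjoint_closed, fun C hC _ => ?_⟩
    have hd : Disjoint (insert ⟨r, hr⟩ S₀) C := Finset.disjoint_insert_left.2
      ⟨h.root_not_mem_closed hr hC, h.disjoint_open_closed S₀ List.mem_cons_self C hC⟩
    exact ⟨hd, hd.symm⟩
  · rintro b hb ⟨c, -, d, hd, -, hbd⟩
    rcases Finset.mem_insert.1 hd with rfl | hd
    · exact lt_asymm hbd (h.root_lt hr (Or.inl ⟨S, List.mem_cons_of_mem _ hS, hb⟩))
    · exact lt_asymm hbd (hsorted.1 S hS d hd b hb)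
lemma skip (hr : r < k) (h : IsNCState i (r + 1) w σ κ) (h0 : i ⟨r, hr⟩ = 0) :
    IsNCState i r w σ (insert {⟨r, hr⟩} κ) where
  word_eq := h.word_eq
  open_nonempty := h.open_nonempty
  closed_nonempty := (Finset.forall_mem_insert _ _ _).2
    ⟨Finset.singleton_nonempty _, h.closed_nonempty⟩
  le_iff y := by
    rw [le_iff_eq_or_succ_le hr, h.le_iff]
    simp [or_and_right, exists_or, or_left_comm]
  disjoint_open_closed S hS := (Finset.forall_mem_insert _ _ _).2
    ⟨Finset.disjoint_singleton_right.2 (h.root_not_mem_open hr hS), h.disjoint_open_closed S hS⟩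
  disjoint_closed := by
    rw [Finset.coe_insert, Set.pairwise_insert]
    exact ⟨h.disjoint_closed, fun C hC _ =>
      ⟨Finset.disjoint_singleton_left.2 (h.root_not_mem_closed hr hC),
        Finset.disjoint_singleton_right.2 (h.root_not_mem_closed hr hC)⟩⟩
  open_sorted := h.open_sorted
  not_straddles S hS := (Finset.forall_mem_insert _ _ _).2
    ⟨fun a _ => not_straddles_singleton a _, h.not_straddles S hS⟩
  not_crosses := by
    rw [Finset.coe_insert, Set.pairwise_insert]
    exact ⟨h.not_crosses, fun C _ _ =>
      ⟨not_crosses_singleton_left _ C, not_crosses_singleton_right _ C⟩⟩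
  closed_sum := (Finset.forall_mem_insert _ _ _).2
    ⟨by rw [blockSum, Finset.sum_singleton, h0], h.closed_sum⟩

lemma unpush (hr : r < k) (h : IsNCState i r w ({⟨r, hr⟩} :: σ) κ) :
    IsNCState i (r + 1) w.tail σ κ := by
  have hsorted := List.pairwise_cons.1 h.open_sorted
  have hxS : ∀ S ∈ σ, ∀ y ∈ S, y ≠ ⟨r, hr⟩ := fun S hS y hy =>
    (hsorted.1 S hS _ (Finset.mem_singleton_self _) y hy).ne'
  have hxC : ∀ C ∈ κ, ∀ y ∈ C, y ≠ ⟨r, hr⟩ := fun C hC y hy hyx =>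
    Finset.disjoint_left.1 (h.disjoint_open_closed _ List.mem_cons_self C hC)
      (Finset.mem_singleton.2 hyx) hy
  exact
  { word_eq := by rw [h.word_eq]; rfl
    open_nonempty := fun S hS => h.open_nonempty S (List.mem_cons_of_mem _ hS)
    closed_nonempty := h.closed_nonempty
    le_iff := fun y => succ_le_iff_of_le_iff hr
      (by rintro (⟨S, hS, hy⟩ | ⟨C, hC, hy⟩) <;> [exact hxS S hS y hy; exact hxC C hC y hy])
      (by rw [h.le_iff]; simp [or_assoc])
    disjoint_open_closed := fun S hS => h.disjoint_open_closed S (List.mem_cons_of_mem _ hS)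
    disjoint_closed := h.disjoint_closed
    open_sorted := hsorted.2
    not_straddles := fun S hS => h.not_straddles S (List.mem_cons_of_mem _ hS)
    not_crosses := h.not_crosses
    closed_sum := h.closed_sum }

lemma unfuse (hr : r < k) {S₀ : Finset (Fin k)}
    (h : IsNCState i r w (insert ⟨r, hr⟩ S₀ :: σ) κ) (hxS₀ : (⟨r, hr⟩ : Fin k) ∉ S₀)
    (hS₀ : S₀.Nonempty) :
    IsNCState i (r + 1) (blockSum i S₀ :: w.tail) (S₀ :: σ) κ := by
  have hsorted := List.pairwise_cons.1 h.open_sorted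
  have hsub : S₀ ⊆ insert ⟨r, hr⟩ S₀ := Finset.subset_insert _ _
  have hxS : ∀ S ∈ S₀ :: σ, ∀ y ∈ S, y ≠ ⟨r, hr⟩ := List.forall_mem_cons.2
    ⟨fun y hy => ne_of_mem_of_not_mem hy hxS₀, fun S hS y hy =>
      (hsorted.1 S hS _ (Finset.mem_insert_self _ _) y hy).ne'⟩
  have hxC : ∀ C ∈ κ, ∀ y ∈ C, y ≠ ⟨r, hr⟩ := fun C hC y hy hyx =>
    Finset.disjoint_left.1 (h.disjoint_open_closed _ List.mem_cons_self C hC)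
      (hyx ▸ Finset.mem_insert_self _ _) hy
  exact
  { word_eq := by simp [h.word_eq]
    open_nonempty := List.forall_mem_cons.2
      ⟨hS₀, fun S hS => h.open_nonempty S (List.mem_cons_of_mem _ hS)⟩
    closed_nonempty := h.closed_nonempty
    le_iff := fun y => succ_le_iff_of_le_iff hr
      (by rintro (⟨S, hS, hy⟩ | ⟨C, hC, hy⟩) <;> [exact hxS S hS y hy; exact hxC C hC y hy])
      (by rw [h.le_iff]; simp [or_assoc])
    disjoint_open_closed := List.forall_mem_cons.2
      ⟨fun C hC => (h.disjoint_open_closed _ List.mem_cons_self C hC).mono_left hsub,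
        fun S hS => h.disjoint_open_closed S (List.mem_cons_of_mem _ hS)⟩
    disjoint_closed := h.disjoint_closed
    open_sorted := List.pairwise_cons.2
      ⟨fun S hS a ha => hsorted.1 S hS a (hsub ha), hsorted.2⟩
    not_straddles := List.forall_mem_cons.2
      ⟨fun C hC a ha => h.not_straddles _ List.mem_cons_self C hC a (hsub ha),
        fun S hS => h.not_straddles S (List.mem_cons_of_mem _ hS)⟩
    not_crosses := h.not_crosses
    closed_sum := h.closed_sum }

lemma leftOf_of_root_mem_closed (hr : r < k) {B : Finset (Fin k)} (h : IsNCState i r w σ κ)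
    (hB : B ∈ κ) (hx : (⟨r, hr⟩ : Fin k) ∈ B) (hS : S ∈ σ) : LeftOf B S := fun a ha b hb => by
  have hbB : b ∉ B := h.not_mem_closed_of_mem_open hS hB hb
  have hxb := root_lt_of_le hr (h.le_of_mem_open hS hb) fun hbx => hbB (hbx ▸ hx)
  refine lt_of_le_of_ne (not_lt.1 fun hba => h.not_straddles S hS B hB b hb
    ⟨_, hx, a, ha, hxb, hba⟩) ?_
  rintro rfl
  exact hbB ha

lemma unpop (hr : r < k) {C₀ : Finset (Fin k)}
    (h : IsNCState i r w σ (insert (insert ⟨r, hr⟩ C₀) κ)) (hxC₀ : (⟨r, hr⟩ : Fin k) ∉ C₀)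
    (hC₀ : C₀.Nonempty) (hB : insert ⟨r, hr⟩ C₀ ∉ κ) :
    IsNCState i (r + 1) (blockSum i C₀ :: w) (C₀ :: σ) κ := by
  have hBmem := Finset.mem_insert_self (insert (⟨r, hr⟩ : Fin k) C₀) κ
  have hsub : κ ⊆ insert (insert ⟨r, hr⟩ C₀) κ := Finset.subset_insert _ _
  have hdisjB : ∀ C ∈ κ, Disjoint (insert ⟨r, hr⟩ C₀) C := fun C hC =>
    h.disjoint_closed hBmem (hsub hC) (ne_of_mem_of_not_mem hC hB).symm
  have hxS : ∀ S ∈ C₀ :: σ, ∀ y ∈ S, y ≠ ⟨r, hr⟩ := List.forall_mem_cons.2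
    ⟨fun y hy => ne_of_mem_of_not_mem hy hxC₀, fun S hS y hy hyx =>
      Finset.disjoint_left.1 (h.disjoint_open_closed S hS _ hBmem) hy
        (hyx ▸ Finset.mem_insert_self _ _)⟩
  have hxC : ∀ C ∈ κ, ∀ y ∈ C, y ≠ ⟨r, hr⟩ := fun C hC y hy hyx =>
    Finset.disjoint_left.1 (hdisjB C hC) (hyx ▸ Finset.mem_insert_self _ _) hy
  have hsorted : ∀ S ∈ σ, LeftOf C₀ S := fun S hS a ha =>
    h.leftOf_of_root_mem_closed hr hBmem (Finset.mem_insert_self _ _) hS a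
      (Finset.mem_insert_of_mem ha)
  exact
  { word_eq := by rw [h.word_eq]; rfl
    open_nonempty := List.forall_mem_cons.2 ⟨hC₀, h.open_nonempty⟩
    closed_nonempty := fun C hC => h.closed_nonempty C (hsub hC)
    le_iff := fun y => succ_le_iff_of_le_iff hr
      (by rintro (⟨S, hS, hy⟩ | ⟨C, hC, hy⟩) <;> [exact hxS S hS y hy; exact hxC C hC y hy])
      (by rw [h.le_iff]; simp [or_and_right, exists_or, or_assoc, or_left_comm])
    disjoint_open_closed := List.forall_mem_cons.2
      ⟨fun C hC => (hdisjB C hC).mono_left (Finset.subset_insert _ _),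
        fun S hS C hC => h.disjoint_open_closed S hS C (hsub hC)⟩
    disjoint_closed := h.disjoint_closed.mono (Finset.coe_subset.2 hsub)
    open_sorted := List.pairwise_cons.2 ⟨hsorted, h.open_sorted⟩
    not_straddles := List.forall_mem_cons.2
      ⟨fun C hC a ha ⟨b, hb, d, hd, hba, had⟩ =>
        h.not_crosses hBmem (hsub hC) (ne_of_mem_of_not_mem hC hB).symm
          ⟨_, b, a, d, root_lt_of_le hr (h.le_of_mem_closed (hsub hC) hb) (hxC C hC b hb),
            hba, had, Finset.mem_insert_self _ _, Finset.mem_insert_of_mem ha, hb, hd⟩,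
        fun S hS C hC => h.not_straddles S hS C (hsub hC)⟩
    not_crosses := h.not_crosses.mono (Finset.coe_subset.2 hsub)
    closed_sum := fun C hC => h.closed_sum C (hsub hC) }

lemma unskip (hr : r < k) (h : IsNCState i r w σ (insert {⟨r, hr⟩} κ))
    (hB : {⟨r, hr⟩} ∉ κ) : IsNCState i (r + 1) w σ κ := by
  have hBmem := Finset.mem_insert_self ({⟨r, hr⟩} : Finset (Fin k)) κ
  have hsub : κ ⊆ insert {⟨r, hr⟩} κ := Finset.subset_insert _ _
  have hxS : ∀ S ∈ σ, ∀ y ∈ S, y ≠ ⟨r, hr⟩ := fun S hS y hy hyx =>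
    Finset.disjoint_left.1 (h.disjoint_open_closed S hS _ hBmem) hy (Finset.mem_singleton.2 hyx)
  have hxC : ∀ C ∈ κ, ∀ y ∈ C, y ≠ ⟨r, hr⟩ := fun C hC y hy hyx =>
    Finset.disjoint_left.1 (h.disjoint_closed hBmem (hsub hC) (ne_of_mem_of_not_mem hC hB).symm)
      (Finset.mem_singleton.2 hyx) hy
  exact
  { word_eq := h.word_eq
    open_nonempty := h.open_nonempty
    closed_nonempty := fun C hC => h.closed_nonempty C (hsub hC)
    le_iff := fun y => succ_le_iff_of_le_iff hr
      (by rintro (⟨S, hS, hy⟩ | ⟨C, hC, hy⟩) <;> [exact hxS S hS y hy; exact hxC C hC y hy])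
      (by rw [h.le_iff]; simp [or_and_right, exists_or, or_left_comm])
    disjoint_open_closed := fun S hS C hC => h.disjoint_open_closed S hS C (hsub hC)
    disjoint_closed := h.disjoint_closed.mono (Finset.coe_subset.2 hsub)
    open_sorted := h.open_sorted
    not_straddles := fun S hS C hC => h.not_straddles S hS C (hsub hC)
    not_crosses := h.not_crosses.mono (Finset.coe_subset.2 hsub)
    closed_sum := fun C hC => h.closed_sum C (hsub hC) }

lemma exists_cons (h : IsNCState i r (a :: w) σ κ) : ∃ S₀ σ', σ = S₀ :: σ' := by
  cases σ with
  | nil => simpa using h.word_eq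
  | cons S₀ σ' => exact ⟨S₀, σ', rfl⟩

lemma eq_cons_of_root_mem_open (hr : r < k) (h : IsNCState i r w σ κ) (hS : S ∈ σ)
    (hx : (⟨r, hr⟩ : Fin k) ∈ S) : ∃ σ', σ = S :: σ' := by
  cases σ with
  | nil => simp at hS
  | cons S₁ σ' =>
    rcases List.mem_cons.1 hS with rfl | hS
    · exact ⟨σ', rfl⟩
    · obtain ⟨y, hy⟩ := h.open_nonempty S₁ List.mem_cons_self
      exact absurd (h.le_of_mem_open List.mem_cons_self hy)
        (not_le.2 ((List.pairwise_cons.1 h.open_sorted).1 S hS y hy _ hx))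

end IsNCState

instance (i : Fin k → ZMod s) (r : ℕ) (w : List (ZMod s)) : Finite (NCState i r w) :=
  have : Finite {σ : List (Finset (Fin k)) | σ.length = w.length} :=
    (List.finite_length_eq _ _).to_subtype
  Finite.of_injective
    (fun p : NCState i r w => ((⟨p.1.1, by simp [p.2.word_eq]⟩ :
      {σ : List (Finset (Fin k)) | σ.length = w.length}), p.1.2))
    fun p q hpq => Subtype.ext (Prod.ext (congrArg (·.1.1) hpq) (congrArg (·.2) hpq))

section Step

variable (hr : r < k)

def pushState (q : {_q : NCState i (r + 1) w.tail // w.head? = some (i ⟨r, hr⟩)}) :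
    NCState i r w :=
  ⟨({⟨r, hr⟩} :: q.1.1.1, q.1.1.2), by
    obtain ⟨⟨_, h⟩, hw⟩ := q
    obtain ⟨t, rfl⟩ := List.head?_eq_some_iff.1 hw
    exact h.push hr⟩

def fuseState (q : {_q : NCState i (r + 1) ((w.headI - i ⟨r, hr⟩) :: w.tail) // w ≠ []}) :
    NCState i r w :=
  ⟨(insert ⟨r, hr⟩ q.1.1.1.headI :: q.1.1.1.tail, q.1.1.2), by
    obtain ⟨⟨⟨σ, κ⟩, h⟩, hw⟩ := q
    obtain ⟨b, t, rfl⟩ := List.exists_cons_of_ne_nil hw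
    obtain ⟨S₀, σ, rfl⟩ := h.exists_cons
    simpa using h.fuse hr⟩

def popState (q : NCState i (r + 1) (-i ⟨r, hr⟩ :: w)) : NCState i r w :=
  ⟨(q.1.1.tail, insert (insert ⟨r, hr⟩ q.1.1.headI) q.1.2), by
    obtain ⟨⟨σ, κ⟩, h⟩ := q
    obtain ⟨S₀, σ, rfl⟩ := h.exists_cons
    exact h.pop hr (add_neg_cancel _)⟩

def skipState (q : {_q : NCState i (r + 1) w // i ⟨r, hr⟩ = 0}) : NCState i r w :=
  ⟨(q.1.1.1, insert {⟨r, hr⟩} q.1.1.2), q.1.2.skip hr q.2⟩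

lemma pushState_injective : Function.Injective (pushState (i := i) (w := w) hr) := by
  rintro ⟨⟨⟨σ₁, κ₁⟩, h₁⟩, _⟩ ⟨⟨⟨σ₂, κ₂⟩, h₂⟩, _⟩ heq
  simp only [pushState, Subtype.mk.injEq, Prod.mk.injEq, List.cons.injEq, true_and] at heq
  obtain ⟨rfl, rfl⟩ := heq
  rfl

lemma fuseState_injective : Function.Injective (fuseState (i := i) (w := w) hr) := by
  rintro ⟨⟨⟨σ₁, κ₁⟩, h₁⟩, _⟩ ⟨⟨⟨σ₂, κ₂⟩, h₂⟩, _⟩ heq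
  obtain ⟨S₁, σ₁, rfl⟩ := h₁.exists_cons
  obtain ⟨S₂, σ₂, rfl⟩ := h₂.exists_cons
  simp only [fuseState, Subtype.mk.injEq, Prod.mk.injEq, List.cons.injEq, List.headI_cons,
    List.tail_cons] at heq
  obtain ⟨⟨hS, rfl⟩, rfl⟩ := heq
  obtain rfl := Finset.eq_of_insert_eq_insert_of_notMem (h₁.root_not_mem_open hr List.mem_cons_self)
    (h₂.root_not_mem_open hr List.mem_cons_self) hS
  rfl

lemma popState_injective : Function.Injective (popState (i := i) (w := w) hr) := by
  rintro ⟨⟨σ₁, κ₁⟩, h₁⟩ ⟨⟨σ₂, κ₂⟩, h₂⟩ heq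
  obtain ⟨S₁, σ₁, rfl⟩ := h₁.exists_cons
  obtain ⟨S₂, σ₂, rfl⟩ := h₂.exists_cons
  simp only [popState, Subtype.mk.injEq, Prod.mk.injEq, List.headI_cons, List.tail_cons] at heq
  obtain ⟨rfl, hκ⟩ := heq
  obtain ⟨hS, rfl⟩ := Finset.eq_and_eq_of_insert_eq_insert hκ (Finset.mem_insert_self _ _)
    (Finset.mem_insert_self _ _) (fun _ => h₁.root_not_mem_closed hr)
    (fun _ => h₂.root_not_mem_closed hr)
  obtain rfl := Finset.eq_of_insert_eq_insert_of_notMem (h₁.root_not_mem_open hr List.mem_cons_self)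
    (h₂.root_not_mem_open hr List.mem_cons_self) hS
  rfl

lemma skipState_injective : Function.Injective (skipState (i := i) (w := w) hr) := by
  rintro ⟨⟨⟨σ₁, κ₁⟩, h₁⟩, _⟩ ⟨⟨⟨σ₂, κ₂⟩, h₂⟩, _⟩ heq
  simp only [skipState, Subtype.mk.injEq, Prod.mk.injEq] at heq
  obtain ⟨rfl, hκ⟩ := heq
  obtain ⟨-, rfl⟩ := Finset.eq_and_eq_of_insert_eq_insert hκ (Finset.mem_singleton_self _)
    (Finset.mem_singleton_self _) (fun _ => h₁.root_not_mem_closed hr)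
    (fun _ => h₂.root_not_mem_closed hr)
  rfl

lemma fuseState_headI_ne
    (q : {_q : NCState i (r + 1) ((w.headI - i ⟨r, hr⟩) :: w.tail) // w ≠ []}) :
    (fuseState hr q).1.1.headI ≠ {⟨r, hr⟩} := by
  obtain ⟨⟨⟨σ, κ⟩, h⟩, _⟩ := q
  obtain ⟨S₀, σ, rfl⟩ := h.exists_cons
  exact Finset.insert_ne_singleton (h.root_not_mem_open hr List.mem_cons_self)
    (h.open_nonempty S₀ List.mem_cons_self)

lemma root_mem_closed_popState (q : NCState i (r + 1) (-i ⟨r, hr⟩ :: w)) :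
    ∃ C ∈ (popState hr q).1.2, ⟨r, hr⟩ ∈ C ∧ C ≠ {⟨r, hr⟩} := by
  obtain ⟨⟨σ, κ⟩, h⟩ := q
  obtain ⟨S₀, σ, rfl⟩ := h.exists_cons
  exact ⟨_, Finset.mem_insert_self _ _, Finset.mem_insert_self _ _,
    Finset.insert_ne_singleton (h.root_not_mem_open hr List.mem_cons_self)
      (h.open_nonempty S₀ List.mem_cons_self)⟩

lemma NCState.not_mem_open_and_closed (p : NCState i r w) :
    (∃ S ∈ p.1.1, y ∈ S) → ¬ ∃ C ∈ p.1.2, y ∈ C :=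
  fun ⟨_, hS, hyS⟩ ⟨_, hC, hyC⟩ => p.2.not_mem_closed_of_mem_open hS hC hyS hyC

def stepState :
    ({_q : NCState i (r + 1) w.tail // w.head? = some (i ⟨r, hr⟩)} ⊕
      {_q : NCState i (r + 1) ((w.headI - i ⟨r, hr⟩) :: w.tail) // w ≠ []} ⊕
      NCState i (r + 1) (-i ⟨r, hr⟩ :: w) ⊕
      {_q : NCState i (r + 1) w // i ⟨r, hr⟩ = 0}) → NCState i r w :=
  Sum.elim (pushState hr) (Sum.elim (fuseState hr) (Sum.elim (popState hr) (skipState hr)))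

lemma stepState_injective : Function.Injective (stepState (i := i) (w := w) hr) := by
  refine (pushState_injective hr).sumElim ((fuseState_injective hr).sumElim
    ((popState_injective hr).sumElim (skipState_injective hr) ?_) ?_) ?_
  · intro q q' heq
    obtain ⟨C, hC, hxC, hne⟩ := root_mem_closed_popState hr q
    rw [heq] at hC
    exact Finset.disjoint_left.1 ((skipState hr q').2.disjoint_closed hC
      (Finset.mem_insert_self _ _) hne) hxC (Finset.mem_singleton_self _)
  · rintro q (q' | q') heq <;> refine (fuseState hr q).not_mem_open_and_closed
      ⟨_, List.mem_cons_self, Finset.mem_insert_self _ _⟩ (heq ▸ ?_)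
    · exact (root_mem_closed_popState hr q').imp fun _ h => ⟨h.1, h.2.1⟩
    · exact ⟨_, Finset.mem_insert_self _ _, Finset.mem_singleton_self _⟩
  · rintro q (q' | q' | q') heq
    · exact fuseState_headI_ne hr q' (congrArg (·.1.1.headI) heq).symm
    all_goals
      refine (pushState hr q).not_mem_open_and_closed
        ⟨_, List.mem_cons_self, Finset.mem_singleton_self _⟩ (heq ▸ ?_)
    · exact (root_mem_closed_popState hr q').imp fun _ h => ⟨h.1, h.2.1⟩
    · exact ⟨_, Finset.mem_insert_self _ _, Finset.mem_singleton_self _⟩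

lemma stepState_surjective : Function.Surjective (stepState (i := i) (w := w) hr) := by
  rintro ⟨⟨σ, κ⟩, h⟩
  rcases (h.le_iff ⟨r, hr⟩).1 le_rfl with ⟨S, hS, hx⟩ | ⟨C, hC, hx⟩
  · obtain ⟨σ, rfl⟩ := h.eq_cons_of_root_mem_open hr hS hx
    obtain ⟨S₀, hxS₀, rfl⟩ := Finset.exists_eq_insert_of_mem hx
    rcases S₀.eq_empty_or_nonempty with rfl | hS₀
    · rw [Finset.insert_empty] at h
      exact ⟨.inl ⟨⟨(σ, κ), h.unpush hr⟩, by simp [h.word_eq, blockSum]⟩,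
        Subtype.ext (by simp [stepState, pushState])⟩
    · have hw : w.headI - i ⟨r, hr⟩ = blockSum i S₀ := by
        simp [h.word_eq, blockSum_insert hxS₀]
      exact ⟨.inr (.inl ⟨⟨(S₀ :: σ, κ), hw ▸ h.unfuse hr hxS₀ hS₀⟩, by simp [h.word_eq]⟩), rfl⟩
  · obtain ⟨κ, hCκ, rfl⟩ := Finset.exists_eq_insert_of_mem hC
    obtain ⟨C₀, hxC₀, rfl⟩ := Finset.exists_eq_insert_of_mem hx
    rcases C₀.eq_empty_or_nonempty with rfl | hC₀
    · rw [Finset.insert_empty] at h hCκ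
      have h0 : i ⟨r, hr⟩ = 0 := by
        simpa [blockSum] using h.closed_sum _ (Finset.mem_insert_self _ _)
      exact ⟨.inr (.inr (.inr ⟨⟨(σ, κ), h.unskip hr hCκ⟩, h0⟩)),
        Subtype.ext (by simp [stepState, skipState])⟩
    · have hw : blockSum i C₀ = -i ⟨r, hr⟩ := by
        have := h.closed_sum _ (Finset.mem_insert_self _ _)
        rw [blockSum_insert hxC₀] at this
        exact eq_neg_of_add_eq_zero_right this
      exact ⟨.inr (.inr (.inl ⟨(C₀ :: σ, κ), hw ▸ h.unpop hr hxC₀ hC₀ hCκ⟩)), rfl⟩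

end Step

lemma card_ncState_step (hr : r < k) :
    Nat.card (NCState i r w) =
      (if w.head? = some (i ⟨r, hr⟩) then Nat.card (NCState i (r + 1) w.tail) else 0) +
        (if w = [] then 0 else Nat.card (NCState i (r + 1) ((w.headI - i ⟨r, hr⟩) :: w.tail))) +
        Nat.card (NCState i (r + 1) (-i ⟨r, hr⟩ :: w)) +
        (if i ⟨r, hr⟩ = 0 then Nat.card (NCState i (r + 1) w) else 0) := by
  rw [← Nat.card_congr (Equiv.ofBijective _ ⟨stepState_injective hr, stepState_surjective hr⟩)]
  simp only [Nat.card_sum]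
  split_ifs <;> simp_all <;> ring

lemma IsNCState.eq_nil_empty (h : IsNCState i k w σ κ) : σ = [] ∧ κ = ∅ := by
  have hy : ∀ y : Fin k, ¬ k ≤ (y : ℕ) := fun y => not_le.2 y.isLt
  refine ⟨List.eq_nil_iff_forall_not_mem.2 fun S hS => ?_,
    Finset.eq_empty_iff_forall_notMem.2 fun C hC => ?_⟩
  · obtain ⟨y, hyS⟩ := h.open_nonempty S hS
    exact hy y (h.le_of_mem_open hS hyS)
  · obtain ⟨y, hyC⟩ := h.closed_nonempty C hC
    exact hy y (h.le_of_mem_closed hC hyC)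

lemma isNCState_top (i : Fin k → ZMod s) : IsNCState i k [] [] ∅ where
  word_eq := rfl
  open_nonempty := by simp
  closed_nonempty := by simp
  le_iff y := by simp
  disjoint_open_closed := by simp
  disjoint_closed := by simp
  open_sorted := List.Pairwise.nil
  not_straddles := by simp
  not_crosses := by simp
  closed_sum := by simp

lemma card_ncState_top : Nat.card (NCState i k w) = if w = [] then 1 else 0 := by
  split_ifs with hw
  · subst hw
    refine Nat.card_eq_one_iff_unique.2 ⟨⟨fun ⟨⟨σ₁, κ₁⟩, h₁⟩ ⟨⟨σ₂, κ₂⟩, h₂⟩ => ?_⟩,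
      ⟨⟨([], ∅), isNCState_top i⟩⟩⟩
    obtain ⟨rfl, rfl⟩ := h₁.eq_nil_empty
    obtain ⟨rfl, rfl⟩ := h₂.eq_nil_empty
    rfl
  · have : IsEmpty (NCState i k w) := ⟨fun ⟨⟨σ, κ⟩, h⟩ =>
      hw (by rw [h.word_eq, h.eq_nil_empty.1, List.map_nil])⟩
    exact Nat.card_of_isEmpty

lemma IsNCState.eq_nil_of_word_nil (h : IsNCState i r [] σ κ) : σ = [] :=
  List.map_eq_nil_iff.1 h.word_eq.symm

lemma IsNCState.isPartitionOfFin_noncrossing (h : IsNCState i 0 [] [] κ) :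
    IsPartitionOfFin k κ ∧ IsNoncrossingFin k κ ∧ ∀ B ∈ κ, ∑ x ∈ B, i x = 0 := by
  have huniq : ∀ y : Fin k, ∀ C ∈ κ, ∀ C' ∈ κ, y ∈ C → y ∈ C' → C = C' :=
    fun y C hC C' hC' hy hy' => by_contra fun hne =>
      Finset.disjoint_left.1 (h.disjoint_closed hC hC' hne) hy hy'
  refine ⟨⟨fun h0 => by simpa using h.closed_nonempty ∅ h0, fun y => ?_⟩, ?_, h.closed_sum⟩
  · obtain ⟨C, hC, hy⟩ : ∃ C ∈ κ, y ∈ C := by simpa using h.le_iff y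
    exact ⟨C, ⟨hC, hy⟩, fun C' hC' => huniq y C' hC'.1 C hC hC'.2 hy⟩
  · rintro ⟨a, b, c, d, hab, hbc, hcd, ⟨C, hC, ha, hc⟩, ⟨C', hC', hb, hd⟩, hsep⟩
    exact h.not_crosses hC hC' (fun hCC' => hsep ⟨C, hC, ha, hCC' ▸ hb⟩)
      ⟨a, b, c, d, hab, hbc, hcd, ha, hc, hb, hd⟩

lemma isNCState_zero_of_isPartitionOfFin (hpart : IsPartitionOfFin k κ)
    (hnc : IsNoncrossingFin k κ) (hsum : ∀ B ∈ κ, ∑ x ∈ B, i x = 0) :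
    IsNCState i 0 [] [] κ := by
  have huniq : ∀ y : Fin k, ∀ C ∈ κ, ∀ C' ∈ κ, y ∈ C → y ∈ C' → C = C' :=
    fun y C hC C' hC' hy hy' => (hpart.2 y).unique ⟨hC, hy⟩ ⟨hC', hy'⟩
  exact
  { word_eq := rfl
    open_nonempty := by simp
    closed_nonempty := fun C hC => Finset.nonempty_iff_ne_empty.2 fun h0 => hpart.1 (h0 ▸ hC)
    le_iff := fun y => by simpa using (hpart.2 y).exists
    disjoint_open_closed := by simp
    disjoint_closed := fun C hC C' hC' hCC' => Finset.disjoint_left.2 fun y hy hy' =>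
      hCC' (huniq y C hC C' hC' hy hy')
    open_sorted := List.Pairwise.nil
    not_straddles := by simp
    not_crosses := fun C hC C' hC' hCC' ⟨a, b, c, d, hab, hbc, hcd, ha, hc, hb, hd⟩ =>
      hnc ⟨a, b, c, d, hab, hbc, hcd, ⟨C, hC, ha, hc⟩, ⟨C', hC', hb, hd⟩,
        fun ⟨B, hB, haB, hbB⟩ => hCC' ((huniq a B hB C hC haB ha).symm.trans
          (huniq b B hB C' hC' hbB hb))⟩
    closed_sum := hsum }

def ncStateZeroEquiv (i : Fin k → ZMod s) :
    NCState i 0 [] ≃ {P : Finset (Finset (Fin k)) //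
      IsPartitionOfFin k P ∧ IsNoncrossingFin k P ∧ ∀ B ∈ P, ∑ x ∈ B, i x = 0} where
  toFun p := ⟨p.1.2, by
    obtain ⟨⟨σ, κ⟩, h⟩ := p
    obtain rfl := h.eq_nil_of_word_nil
    exact h.isPartitionOfFin_noncrossing⟩
  invFun P := ⟨([], P.1), isNCState_zero_of_isPartitionOfFin P.2.1 P.2.2.1 P.2.2.2⟩
  left_inv := fun ⟨⟨σ, κ⟩, h⟩ => by
    obtain rfl := h.eq_nil_of_word_nil
    rfl
  right_inv _ := rfl

noncomputable def prodFrom (i : Fin k → ZMod s) (r : ℕ) : List (ZMod s) →₀ ℤ :=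
  ((List.ofFn fun t => generator s (i t)).drop r).foldr (fusionMul s) (Finsupp.single [] 1)

lemma prodFrom_of_le (hr : k ≤ r) : prodFrom i r = Finsupp.single [] 1 := by
  rw [prodFrom, List.drop_eq_nil_of_le (by simpa using hr), List.foldr_nil]

lemma prodFrom_eq_fusionMul (hr : r < k) :
    prodFrom i r = fusionMul s (generator s (i ⟨r, hr⟩)) (prodFrom i (r + 1)) := by
  rw [prodFrom, List.drop_eq_getElem_cons (by simpa using hr), List.foldr_cons, List.getElem_ofFn]
  rfl

theorem prodFrom_apply_eq_card (hr : r ≤ k) (w : List (ZMod s)) :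
    prodFrom i r w = Nat.card (NCState i r w) := by
  induction hr using Nat.decreasingInduction generalizing w with
  | self =>
    rw [prodFrom_of_le le_rfl, card_ncState_top, Finsupp.single_apply]
    split_ifs <;> simp_all [eq_comm]
  | of_succ r hr ih =>
    rw [prodFrom_eq_fusionMul hr, fusionMul_generator_apply, card_ncState_step hr]
    simp only [ih]
    push_cast
    split_ifs <;> simp

end FusionNC

theorem fusion_unit_count_noncrossing_general (s k : ℕ) (i : Fin k → ZMod s) :
    ((List.ofFn fun r : Fin k =>
        (Finsupp.single [i r] 1 +
          if i r = 0 then Finsupp.single ([] : List (ZMod s)) (1 : ℤ) else 0)).foldr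
      (fusionMul s) (Finsupp.single [] 1)) [] =
    (Nat.card {P : Finset (Finset (Fin k)) //
        IsPartitionOfFin k P ∧ IsNoncrossingFin k P ∧
          ∀ B ∈ P, ∑ x ∈ B, i x = 0} : ℤ) := by
  rw [← Nat.card_congr (FusionNC.ncStateZeroEquiv i)]
  exact FusionNC.prodFrom_apply_eq_card (Nat.zero_le k) []

/-- the coefficient of the empty word in the fusion product
`P = (a_{i_1} + δ_{i_1,0} a_∅) ⊗ ⋯ ⊗ (a_{i_k} + δ_{i_k,0} a_∅)` equals the number
of noncrossing partitions of `{1, …, k}` all of whose blocks have index sum `0`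
in `ℤ/sℤ`. -/
theorem fusion_unit_count_noncrossing (s k : ℕ) (hs : 1 ≤ s) (hk : 1 ≤ k)
    (i : Fin k → ZMod s) :
    ((List.ofFn fun r : Fin k =>
        (Finsupp.single [i r] 1 +
          if i r = 0 then Finsupp.single ([] : List (ZMod s)) (1 : ℤ) else 0)).foldr
      (fusionMul s) (Finsupp.single [] 1)) [] =
    (Nat.card {P : Finset (Finset (Fin k)) //
        IsPartitionOfFin k P ∧ IsNoncrossingFin k P ∧
          ∀ B ∈ P, ∑ x ∈ B, i x = 0} : ℤ) :=
  fusion_unit_count_noncrossing_general s k i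
end

section
/- Let s ≥ 1 and let M be the free product (coproduct) of monoids of the free monoid on one generator a and the cyclic group of order s with generator z (so M = ⟨a, z | z^s = 1⟩). Then the elements a z^i a for i ∈ ℤ/sℤ are free in M: the monoid homomorphism from the free monoid on the alphabet ℤ/sℤ to M sending the letter i to a z^i a is injective. In particular, the submonoid of M generated by {a z^i a : i ∈ ℤ/sℤ} is a free monoid on these s generators. -/
/-- The monoid `M = ⟨a, z ∣ z^s = 1⟩`: the free product (coproduct) of the free
monoid on one generator and the cyclic group of order `s`. -/
def FreeCyclicCoprod (s : ℕ) : Type :=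
  Monoid.Coprod (FreeMonoid Unit) (Multiplicative (ZMod s))

instance (s : ℕ) : Monoid (FreeCyclicCoprod s) :=
  inferInstanceAs (Monoid (Monoid.Coprod (FreeMonoid Unit) (Multiplicative (ZMod s))))

/-- The generator `a` of `M = ⟨a, z ∣ z^s = 1⟩`. -/
def genA (s : ℕ) : FreeCyclicCoprod s :=
  Monoid.Coprod.inl (FreeMonoid.of ())

/-- The element `z^i` of `M = ⟨a, z ∣ z^s = 1⟩`, for `i ∈ ℤ/sℤ`. -/
def genZpow (s : ℕ) (i : ZMod s) : FreeCyclicCoprod s :=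
  Monoid.Coprod.inr (Multiplicative.ofAdd i)

/-!
The coproduct `FreeMonoid α ∗ G` acts on states `(L, o)`: `L : List G` holds the letters
recovered so far and `o` is an optionally open bracket holding the element of `G` read since
it was opened. A letter of `α` opens a closed bracket with value `1`, or closes an open one by
pushing its value onto `L`; `g ∈ G` multiplies the value of an open bracket by `g`. Hence
`x g x` pushes `g`, and from the empty state the image of a word under `g ↦ x g x` returns
the word itself.
-/

namespace Monoid.Coprod.SandwichParse

variable {α G : Type*} [Monoid G]

def bracket : Function.End (List G × Option G)
  | (L, none) => (L, some 1)
  | (L, some g) => (g :: L, none)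

def scale : G →* Function.End (List G × Option G) where
  toFun g p := (p.1, p.2.map (g * ·))
  map_one' := by
    funext ⟨L, o⟩
    cases o <;> simp [Function.End.one_def]
  map_mul' g h := by
    funext ⟨L, o⟩
    cases o
    · rfl
    · exact congrArg (fun a => (L, some a)) (mul_assoc g h _)

theorem scale_apply (g : G) (L : List G) (o : Option G) :
    scale g (L, o) = (L, o.map (g * ·)) :=
  rfl

def parse : Monoid.Coprod (FreeMonoid α) G →* Function.End (List G × Option G) :=
  Monoid.Coprod.lift (FreeMonoid.lift fun _ => bracket) scale

theorem parse_mul_apply (m n : Monoid.Coprod (FreeMonoid α) G) (p : List G × Option G) :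
    parse (m * n) p = parse m (parse n p) := by
  rw [map_mul]
  rfl

theorem parse_inl_of (x : α) : parse (inl (.of x) : Monoid.Coprod (FreeMonoid α) G) = bracket :=
  (lift_apply_inl _ _ _).trans (FreeMonoid.lift_eval_of _ _)

theorem parse_inr (g : G) : parse (inr g : Monoid.Coprod (FreeMonoid α) G) = scale g :=
  lift_apply_inr _ _ _

theorem parse_sandwich (x : α) (g : G) (L : List G) :
    parse (inl (.of x) * inr g * inl (.of x)) (L, none) = (g :: L, none) := by
  rw [parse_mul_apply, parse_mul_apply, parse_inl_of, parse_inr]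
  simp [bracket, scale_apply]

theorem parse_lift_sandwich (x : α) (w : FreeMonoid G) (L : List G) :
    parse (FreeMonoid.lift (fun g => inl (.of x) * inr g * inl (.of x)) w) (L, none) =
      (w.toList ++ L, none) := by
  induction w using FreeMonoid.inductionOn' generalizing L with
  | one => rfl
  | of_mul g w ih =>
    rw [map_mul, parse_mul_apply, ih, FreeMonoid.lift_eval_of, parse_sandwich]
    simp

end Monoid.Coprod.SandwichParse

open Monoid.Coprod.SandwichParse in
theorem Monoid.Coprod.lift_sandwich_injective {α G : Type*} [Monoid G] (x : α) :
    Function.Injective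
      (FreeMonoid.lift fun g : G => (inl (.of x) * inr g * inl (.of x) :
        Monoid.Coprod (FreeMonoid α) G)) := by
  intro v w h
  have hparse := congrArg (fun m => (parse m ([], none)).1) h
  simp only [parse_lift_sandwich, List.append_nil] at hparse
  exact FreeMonoid.toList.injective hparse

theorem azia_free_in_coprod_general (s : ℕ) :
    Function.Injective
      (FreeMonoid.lift fun i : ZMod s => genA s * genZpow s i * genA s) ∧
    MonoidHom.mrange
        (FreeMonoid.lift fun i : ZMod s => genA s * genZpow s i * genA s) =
      Submonoid.closure {x : FreeCyclicCoprod s |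
        ∃ i : ZMod s, x = genA s * genZpow s i * genA s} := by
  refine ⟨?_, ?_⟩
  · exact Monoid.Coprod.lift_sandwich_injective (G := Multiplicative (ZMod s)) ()
  · rw [FreeMonoid.mrange_lift]
    congr 1
    ext x
    exact exists_congr fun _ => eq_comm

/-- the elements `a z^i a`, for `i ∈ ℤ/sℤ`, are free in
`M = ⟨a, z ∣ z^s = 1⟩`: the monoid homomorphism from the free monoid on the
alphabet `ℤ/sℤ` sending the letter `i` to `a z^i a` is injective; in particular
the submonoid they generate (the range of this homomorphism, which is the
submonoid closure of the set of these elements) is a free monoid on `s`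
generators. -/
theorem azia_free_in_coprod (s : ℕ) (hs : 1 ≤ s) :
    Function.Injective
      (FreeMonoid.lift fun i : ZMod s => genA s * genZpow s i * genA s) ∧
    MonoidHom.mrange
        (FreeMonoid.lift fun i : ZMod s => genA s * genZpow s i * genA s) =
      Submonoid.closure {x : FreeCyclicCoprod s |
        ∃ i : ZMod s, x = genA s * genZpow s i * genA s} :=
  azia_free_in_coprod_general s
end
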